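/- arXiv:2605.07724 — 9 statements merged into one kernel-verified Lean document; each statement's English description precedes it below -/
import Mathlib

section
/- Let p be a probability density on 𝒳 ⊆ ℝ^d and r : 𝒳 → ℝ a bounded measurable reward. Draw K ≥ 2 i.i.d. candidates x_1,…,x_K ∼ p and select one index k with probability e^{r(x_k)} / Σ_{j=1}^K e^{r(x_j)} (Bradley–Terry selection). Then the marginal density of the selected sample x̂ is p(x)·H^{K,r}_p(x), and in particular ∫_𝒳 p(x) H^{K,r}_p(x) dx = 1. -/
open MeasureTheory Filter Set

set_option maxHeartbeats 1000000

private lemma integrable_of_abs_le' {α : Type*} [MeasurableSpace α] (μ : Measure α)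
    [IsFiniteMeasure μ] {f : α → ℝ} (hm : Measurable f) (c : ℝ) (h : ∀ x, |f x| ≤ c) :
    Integrable f μ :=
  (integrable_const c).mono' hm.aestronglyMeasurable
    (Filter.Eventually.of_forall fun x => by simpa [Real.norm_eq_abs] using h x)

private lemma piCongrLeft_const_apply {X : Type*} [MeasurableSpace X] {ι : Type*} (e : ι ≃ ι)
    (x : ι → X) (i : ι) :
    (MeasurableEquiv.piCongrLeft (fun _ => X) e) x i = x (e.symm i) := by
  conv_lhs => rw [← e.apply_symm_apply i]
  simp [MeasurableEquiv.piCongrLeft, Equiv.piCongrLeft_apply_apply]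
  rw [← e.apply_symm_apply i, Equiv.piCongrLeft_apply_apply]
  simp

/-- The Bradley–Terry curation weight `H^{K,r}_p(x)`: the expected BT win
probability of candidate `x` when compared against `K − 1` i.i.d. draws from `p`. -/
noncomputable def btWeight {X : Type*} [MeasurableSpace X] (p : Measure X) (r : X → ℝ)
    (K : ℕ) (x : X) : ℝ :=
  ∫ y : Fin (K - 1) → X,
    (K : ℝ) * Real.exp (r x) / (Real.exp (r x) + ∑ j, Real.exp (r (y j)))
    ∂(Measure.pi fun _ => p)

private lemma bt_key {X : Type*} [MeasurableSpace X] (p : Measure X) [IsProbabilityMeasure p]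
    (r : X → ℝ) (hr : Measurable r) (n : ℕ) (A : Set X) (hA : MeasurableSet A) :
    (∫ x : Fin (n + 2) → X,
        (∑ k, Set.indicator A (fun y => Real.exp (r y)) (x k)) /
          (∑ j, Real.exp (r (x j)))
        ∂(Measure.pi fun _ => p))
      = ∫ x in A, btWeight p r (n + 2) x ∂p := by
  set E : X → ℝ := fun y => Real.exp (r y) with hE
  set μ : Measure (Fin (n + 2) → X) := Measure.pi fun _ => p with hμ
  set ν : Measure (Fin (n + 1) → X) := Measure.pi fun _ => p with hν
  have hS : ∀ x : Fin (n + 2) → X, 0 < ∑ j, E (x j) := fun x =>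
    Finset.sum_pos (fun j _ => Real.exp_pos _) ⟨0, Finset.mem_univ 0⟩
  have hindnn : ∀ a, 0 ≤ A.indicator E a := fun a =>
    Set.indicator_nonneg (fun y _ => (Real.exp_pos _).le) a
  have hindle : ∀ a, A.indicator E a ≤ E a := fun a =>
    Set.indicator_le_self' (fun y _ => (Real.exp_pos _).le) a
  have hmeas : ∀ k : Fin (n + 2), Measurable
      (fun x : Fin (n + 2) → X => A.indicator E (x k) / ∑ j, E (x j)) := by
    intro k
    exact ((hr.exp.indicator hA).comp (measurable_pi_apply k)).div
      (Finset.measurable_sum _ fun j _ => hr.exp.comp (measurable_pi_apply j))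
  have hbound : ∀ (k : Fin (n + 2)) (x : Fin (n + 2) → X), |A.indicator E (x k) / ∑ j, E (x j)| ≤ 1 := by
    intro k x
    rw [abs_of_nonneg (div_nonneg (hindnn _) (hS x).le), div_le_one (hS x)]
    exact (hindle _).trans
      (Finset.single_le_sum (fun j _ => (Real.exp_pos (r (x j))).le) (Finset.mem_univ k))
  have hint : ∀ k : Fin (n + 2),
      Integrable (fun x : Fin (n + 2) → X => A.indicator E (x k) / ∑ j, E (x j)) μ :=
    fun k => integrable_of_abs_le' μ (hmeas k) 1 (hbound k)
  have step1 : (∫ x : Fin (n + 2) → X,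
        (∑ k, A.indicator E (x k)) / (∑ j, Real.exp (r (x j))) ∂μ)
      = ∑ k : Fin (n + 2), ∫ x, A.indicator E (x k) / ∑ j, E (x j) ∂μ := by
    rw [← integral_finset_sum _ (fun k _ => hint k)]
    congr 1
    funext x
    rw [← Finset.sum_div]
  have step2 : ∀ k : Fin (n + 2),
      (∫ x, A.indicator E (x k) / ∑ j, E (x j) ∂μ)
        = ∫ x, A.indicator E (x 0) / ∑ j, E (x j) ∂μ := by
    intro k
    have hmp := measurePreserving_piCongrLeft (fun _ : Fin (n + 2) => p) (Equiv.swap 0 k)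
    have hcomp := hmp.integral_comp
      (MeasurableEquiv.piCongrLeft (fun _ => X) (Equiv.swap 0 k)).measurableEmbedding
      (fun x : Fin (n + 2) → X => A.indicator E (x 0) / ∑ j, E (x j))
    rw [← hcomp]
    congr 1
    funext x
    have h0 : (MeasurableEquiv.piCongrLeft (fun _ => X) (Equiv.swap 0 k)) x 0 = x k := by
      rw [piCongrLeft_const_apply]
      simp
    have hsum : ∑ j, E ((MeasurableEquiv.piCongrLeft (fun _ => X) (Equiv.swap 0 k)) x j)
        = ∑ j, E (x j) := by
      have h1 : ∀ j, (MeasurableEquiv.piCongrLeft (fun _ => X) (Equiv.swap 0 k)) x j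
          = x ((Equiv.swap 0 k).symm j) := fun j => piCongrLeft_const_apply _ x j
      simp_rw [h1]
      exact Equiv.sum_comp (Equiv.swap 0 k).symm (fun j => E (x j))
    rw [h0, hsum]
  have step3 : (∫ x : Fin (n + 2) → X,
        (∑ k, A.indicator E (x k)) / (∑ j, Real.exp (r (x j))) ∂μ)
      = ∫ x, ((n + 2 : ℕ) : ℝ) * A.indicator E (x 0) / ∑ j, E (x j) ∂μ := by
    rw [step1]
    have h2 : ∀ x : Fin (n + 2) → X, ((n + 2 : ℕ) : ℝ) * A.indicator E (x 0) / ∑ j, E (x j)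
        = ((n + 2 : ℕ) : ℝ) * (A.indicator E (x 0) / ∑ j, E (x j)) := fun x =>
      mul_div_assoc _ _ _
    simp_rw [h2]
    rw [integral_const_mul]
    simp_rw [step2]
    rw [Finset.sum_const, Finset.card_univ, Fintype.card_fin, nsmul_eq_mul]
  -- Fubini via splitting off the first coordinate
  set g : X × (Fin (n + 1) → X) → ℝ := fun z =>
    ((n + 2 : ℕ) : ℝ) * A.indicator E z.1 / (Real.exp (r z.1) + ∑ j, E (z.2 j)) with hg
  have hgbound : ∀ z, |g z| ≤ ((n + 2 : ℕ) : ℝ) := by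
    intro z
    have hD : 0 < Real.exp (r z.1) + ∑ j, E (z.2 j) :=
      add_pos (Real.exp_pos _) (Finset.sum_pos (fun j _ => Real.exp_pos _) ⟨0, Finset.mem_univ 0⟩)
    have hnum : (0 : ℝ) ≤ ((n + 2 : ℕ) : ℝ) * A.indicator E z.1 :=
      mul_nonneg (Nat.cast_nonneg _) (Set.indicator_nonneg (fun y _ => (Real.exp_pos _).le) _)
    rw [hg, abs_of_nonneg (div_nonneg hnum hD.le), div_le_iff₀ hD]
    have h1 : A.indicator E z.1 ≤ Real.exp (r z.1) + ∑ j, E (z.2 j) := by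
      refine le_trans (Set.indicator_le_self' (fun y _ => (Real.exp_pos _).le) _) ?_
      exact le_add_of_le_of_nonneg le_rfl
        (Finset.sum_nonneg fun j _ => (Real.exp_pos _).le)
    exact mul_le_mul_of_nonneg_left h1 (Nat.cast_nonneg _)
  have hgmeas : Measurable g := by
    refine Measurable.div ?_ ?_
    · exact measurable_const.mul ((hr.exp.indicator hA).comp measurable_fst)
    · exact ((hr.exp.comp measurable_fst).add
        (Finset.measurable_sum _ fun j _ =>
          hr.exp.comp ((measurable_pi_apply j).comp measurable_snd)))
  have hgint : Integrable g (p.prod ν) :=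
    integrable_of_abs_le' _ hgmeas _ hgbound
  have hmp2 := measurePreserving_piFinSuccAbove (fun _ : Fin (n + 2) => p) 0
  have hcomp2 := hmp2.integral_comp
    (MeasurableEquiv.piFinSuccAbove (fun _ => X) 0).measurableEmbedding g
  have hgT : ∀ x : Fin (n + 2) → X,
      g ((MeasurableEquiv.piFinSuccAbove (fun _ => X) 0) x)
        = ((n + 2 : ℕ) : ℝ) * A.indicator E (x 0) / ∑ j, E (x j) := by
    intro x
    have hx : (MeasurableEquiv.piFinSuccAbove (fun _ => X) 0) x
        = (x 0, fun j => x j.succ) := rfl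
    rw [hx, hg]
    simp only
    rw [Fin.sum_univ_succ (fun j => E (x j))]
  have step4 : (∫ x, ((n + 2 : ℕ) : ℝ) * A.indicator E (x 0) / ∑ j, E (x j) ∂μ)
      = ∫ z, g z ∂(p.prod ν) := by
    rw [← hcomp2]
    congr 1
    funext x
    rw [hgT x]
  have step5 : (∫ z, g z ∂(p.prod ν)) = ∫ a, ∫ b, g (a, b) ∂ν ∂p := integral_prod g hgint
  have step6 : ∀ a : X, (∫ b, g (a, b) ∂ν)
      = A.indicator (fun t => btWeight p r (n + 2) t) a := by
    intro a
    by_cases ha : a ∈ A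
    · rw [Set.indicator_of_mem ha]
      have h3 : ∀ b : Fin (n + 1) → X, g (a, b)
          = ((n + 2 : ℕ) : ℝ) * Real.exp (r a) / (Real.exp (r a) + ∑ j, E (b j)) := by
        intro b
        rw [hg]
        simp only
        rw [Set.indicator_of_mem ha]
      simp_rw [h3]
      rfl
    · rw [Set.indicator_of_notMem ha]
      have h3 : ∀ b : Fin (n + 1) → X, g (a, b) = 0 := by
        intro b
        rw [hg]
        simp only
        rw [Set.indicator_of_notMem ha, mul_zero, zero_div]
      simp_rw [h3]
      exact integral_zero _ _
  calc (∫ x : Fin (n + 2) → X,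
          (∑ k, A.indicator E (x k)) / (∑ j, Real.exp (r (x j))) ∂μ)
      = ∫ x, ((n + 2 : ℕ) : ℝ) * A.indicator E (x 0) / ∑ j, E (x j) ∂μ := step3
    _ = ∫ z, g z ∂(p.prod ν) := step4
    _ = ∫ a, ∫ b, g (a, b) ∂ν ∂p := step5
    _ = ∫ a, A.indicator (fun t => btWeight p r (n + 2) t) a ∂p := by simp_rw [step6]
    _ = ∫ x in A, btWeight p r (n + 2) x ∂p := integral_indicator hA

/-- Draw `K ≥ 2` i.i.d. candidates from a probability density `p` on
`𝒳 ⊆ ℝ^d` and select one index `k` with Bradley–Terry probability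
`e^{r(x_k)} / Σ_j e^{r(x_j)}`.  Then the marginal law of the selected sample has
density `H^{K,r}_p` with respect to `p`; in particular `∫ p(x) H^{K,r}_p(x) dx = 1`. -/
theorem selected_sample_marginal {d : ℕ}
    (p : Measure (EuclideanSpace ℝ (Fin d))) [IsProbabilityMeasure p]
    (r : EuclideanSpace ℝ (Fin d) → ℝ) (hr : Measurable r)
    (C : ℝ) (hbdd : ∀ x, |r x| ≤ C)
    (K : ℕ) (hK : 2 ≤ K) :
    (∀ A : Set (EuclideanSpace ℝ (Fin d)), MeasurableSet A →
      -- probability that the BT-selected candidate lands in `A`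
      (∫ x : Fin K → EuclideanSpace ℝ (Fin d),
          (∑ k, Set.indicator A (fun y => Real.exp (r y)) (x k)) /
            (∑ j, Real.exp (r (x j)))
          ∂(Measure.pi fun _ => p))
        = ∫ x in A, btWeight p r K x ∂p) ∧
    (∫ x, btWeight p r K x ∂p) = 1 := by
  obtain ⟨n, rfl⟩ : ∃ n, K = n + 2 := ⟨K - 2, by omega⟩
  have key := fun (A : Set (EuclideanSpace ℝ (Fin d))) (hA : MeasurableSet A) =>
    bt_key p r hr n A hA
  refine ⟨key, ?_⟩
  have huniv := key Set.univ MeasurableSet.univ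
  rw [Set.indicator_univ] at huniv
  have hone : (∫ x : Fin (n + 2) → EuclideanSpace ℝ (Fin d),
      (∑ k, Real.exp (r (x k))) / (∑ j, Real.exp (r (x j)))
      ∂(Measure.pi fun _ => p)) = 1 := by
    have h1 : ∀ x : Fin (n + 2) → EuclideanSpace ℝ (Fin d),
        (∑ k, Real.exp (r (x k))) / (∑ j, Real.exp (r (x j))) = 1 := fun x =>
      div_self (Finset.sum_pos (fun j _ => Real.exp_pos _) ⟨0, Finset.mem_univ 0⟩).ne'
    simp_rw [h1]
    simp
  rw [hone] at huniv
  rw [← setIntegral_univ]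
  exact huniv.symm
end

section
/- Let r : 𝒳 → ℝ be bounded and measurable and let p be a probability density on 𝒳 ⊆ ℝ^d. Then for every x ∈ 𝒳, the Bradley–Terry curation weight converges pointwise to the exponential tilt: H^{K,r}_p(x) → H^{∞,r}_p(x) = e^{r(x)} / E_{y∼p}[e^{r(y)}] as K → ∞. -/
open MeasureTheory Filter Set

lemma bt_integrable_of_bound {α : Type*} [MeasurableSpace α] {μ : Measure α} [IsFiniteMeasure μ]
    {f : α → ℝ} (hf : Measurable f) (B : ℝ) (hB : ∀ a, |f a| ≤ B) : Integrable f μ :=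
  Integrable.mono' (integrable_const B) hf.aestronglyMeasurable
    (Filter.Eventually.of_forall fun a => by simpa [Real.norm_eq_abs] using hB a)

lemma bt_pi_integral_prod {X : Type*} [MeasurableSpace X] (p : Measure X) [SigmaFinite p]
    {n : ℕ} (f : Fin n → X → ℝ) :
    ∫ y : Fin n → X, ∏ i, f i (y i) ∂(Measure.pi fun _ => p) = ∏ i, ∫ x, f i x ∂p := by
  letI : MeasureSpace X := ⟨p⟩
  haveI : SigmaFinite (volume : Measure X) := ‹SigmaFinite p›
  exact MeasureTheory.integral_fintype_prod_eq_prod f (μ := fun _ => p)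

lemma bt_pi_integral_eval {X : Type*} [MeasurableSpace X] (p : Measure X) [IsProbabilityMeasure p]
    {n : ℕ} (g : X → ℝ) (j : Fin n) :
    ∫ y : Fin n → X, g (y j) ∂(Measure.pi fun _ => p) = ∫ t, g t ∂p := by
  have h := bt_pi_integral_prod p (fun i t => if i = j then g t else 1)
  have h1 : ∀ y : Fin n → X, (∏ i, if i = j then g (y i) else 1) = g (y j) := by
    intro y; simp [Finset.prod_ite_eq']
  have h2 : ∀ i : Fin n, (∫ t, (if i = j then g t else 1) ∂p) = if i = j then ∫ t, g t ∂p else 1 := by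
    intro i; split_ifs <;> simp
  simp only [h1, h2] at h
  rw [h, Finset.prod_ite_eq']
  simp

lemma bt_pi_integral_eval_mul {X : Type*} [MeasurableSpace X] (p : Measure X)
    [IsProbabilityMeasure p] {n : ℕ} (g : X → ℝ) {i j : Fin n} (hij : i ≠ j) :
    ∫ y : Fin n → X, g (y i) * g (y j) ∂(Measure.pi fun _ => p)
      = (∫ t, g t ∂p) * (∫ t, g t ∂p) := by
  have h := bt_pi_integral_prod p
    (fun k t => (if k = i then g t else 1) * (if k = j then g t else 1))
  have h1 : ∀ y : Fin n → X,
      (∏ k, ((if k = i then g (y k) else 1) * (if k = j then g (y k) else 1)))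
        = g (y i) * g (y j) := by
    intro y
    rw [Finset.prod_mul_distrib, Finset.prod_ite_eq', Finset.prod_ite_eq']
    simp
  have h2 : ∀ k : Fin n, (∫ t, (if k = i then g t else 1) * (if k = j then g t else 1) ∂p)
      = (if k = i then (∫ t, g t ∂p) else 1) * (if k = j then (∫ t, g t ∂p) else 1) := by
    intro k
    by_cases hki : k = i
    · subst hki; simp [hij]
    · by_cases hkj : k = j <;> simp [hki, hkj, Ne.symm hij]
  simp only [h1, h2] at h
  rw [h, Finset.prod_mul_distrib, Finset.prod_ite_eq', Finset.prod_ite_eq']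
  simp

lemma bt_key_bounds {X : Type*} [MeasurableSpace X] (p : Measure X) [IsProbabilityMeasure p]
    (g : X → ℝ) (hg : Measurable g) (eC : ℝ) (heC : 1 ≤ eC)
    (hlb : ∀ t, eC⁻¹ ≤ g t) (hub : ∀ t, g t ≤ eC)
    (c : ℝ) (hc : 0 < c) (K n : ℕ) (hn : 1 ≤ n) :
    (K : ℝ) * c / (c + n * (∫ t, g t ∂p))
      ≤ (∫ y : Fin n → X, (K : ℝ) * c / (c + ∑ j, g (y j)) ∂(Measure.pi fun _ => p)) ∧
    (∫ y : Fin n → X, (K : ℝ) * c / (c + ∑ j, g (y j)) ∂(Measure.pi fun _ => p))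
      ≤ (K : ℝ) * c / (c + n * (∫ t, g t ∂p))
        + (K : ℝ) * c * eC ^ 3 / (c + n * (∫ t, g t ∂p)) ^ 2 := by
  have heC0 : (0 : ℝ) < eC := lt_of_lt_of_le one_pos heC
  have hg0 : ∀ t, 0 < g t := fun t => lt_of_lt_of_le (inv_pos.2 heC0) (hlb t)
  have hgabs : ∀ t, |g t| ≤ eC := fun t => abs_le.2 ⟨by nlinarith [hg0 t], hub t⟩
  have hgint : Integrable g p := bt_integrable_of_bound hg eC hgabs
  set m := ∫ t, g t ∂p with hmdef
  have hm_lb : eC⁻¹ ≤ m := by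
    rw [hmdef]
    calc eC⁻¹ = ∫ _, eC⁻¹ ∂p := by simp
    _ ≤ ∫ t, g t ∂p := integral_mono (integrable_const _) hgint hlb
  have hm0 : 0 < m := lt_of_lt_of_le (inv_pos.2 heC0) hm_lb
  have hm_ub : m ≤ eC := by
    rw [hmdef]
    calc ∫ t, g t ∂p ≤ ∫ _, eC ∂p := integral_mono hgint (integrable_const _) hub
    _ = eC := by simp
  set Q := ∫ t, g t * g t ∂p with hQdef
  have hQ_ub : Q ≤ eC ^ 2 := by
    rw [hQdef]
    calc ∫ t, g t * g t ∂p ≤ ∫ _, eC ^ 2 ∂p := by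
          refine integral_mono (bt_integrable_of_bound (hg.mul hg) (eC * eC) ?_)
            (integrable_const _) ?_
          · intro t; rw [abs_mul]
            exact mul_le_mul (hgabs t) (hgabs t) (abs_nonneg _) heC0.le
          · intro t
            show g t * g t ≤ eC ^ 2
            nlinarith [hg0 t, hub t]
    _ = eC ^ 2 := by simp
  have hn0 : (0 : ℝ) < n := by exact_mod_cast Nat.lt_of_lt_of_le Nat.zero_lt_one hn
  set μ := (Measure.pi fun _ : Fin n => p) with hμdef
  haveI : IsProbabilityMeasure μ := by rw [hμdef]; infer_instance
  set S : (Fin n → X) → ℝ := fun y => ∑ j, g (y j) with hSdef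
  have hSmeas : Measurable S := Finset.measurable_sum _ (fun j _ => hg.comp (measurable_pi_apply j))
  have hS_lb : ∀ y, (n : ℝ) * eC⁻¹ ≤ S y := by
    intro y
    calc (n : ℝ) * eC⁻¹ = ∑ _j : Fin n, eC⁻¹ := by simp [mul_comm]
    _ ≤ S y := Finset.sum_le_sum fun j _ => hlb _
  have hS_ub : ∀ y, S y ≤ (n : ℝ) * eC := by
    intro y
    calc S y ≤ ∑ _j : Fin n, eC := Finset.sum_le_sum fun j _ => hub _
    _ = (n : ℝ) * eC := by simp [mul_comm]
  have hS_pos : ∀ y, 0 < S y := fun y =>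
    lt_of_lt_of_le (mul_pos hn0 (inv_pos.2 heC0)) (hS_lb y)
  have hSint : Integrable S μ := bt_integrable_of_bound hSmeas ((n : ℝ) * eC)
    (fun y => abs_le.2 ⟨by nlinarith [hS_pos y], hS_ub y⟩)
  have hint1 : ∀ j : Fin n, Integrable (fun y : Fin n → X => g (y j)) μ := fun j =>
    bt_integrable_of_bound (hg.comp (measurable_pi_apply j)) eC (fun y => hgabs _)
  have hS1 : ∫ y, S y ∂μ = n * m := by
    rw [hSdef]
    rw [integral_finset_sum _ (fun j _ => hint1 j)]
    simp only [hμdef, bt_pi_integral_eval p g]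
    simp [mul_comm]
    exact Or.inl rfl
  -- second moment
  have hintpair : ∀ i j : Fin n, Integrable (fun y => g (y i) * g (y j)) μ := by
    intro i j
    refine bt_integrable_of_bound (((hg.comp (measurable_pi_apply i)).mul
      (hg.comp (measurable_pi_apply j)))) (eC * eC) (fun y => ?_)
    rw [abs_mul]; exact mul_le_mul (hgabs _) (hgabs _) (abs_nonneg _) heC0.le
  have hpair : ∀ i j : Fin n, ∫ y, g (y i) * g (y j) ∂μ = if i = j then Q else m * m := by
    intro i j
    by_cases h : i = j
    · subst h; simp only [if_pos rfl, hμdef, hQdef]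
      exact bt_pi_integral_eval p (fun t => g t * g t) i
    · simp only [if_neg h, hμdef, hmdef]
      exact bt_pi_integral_eval_mul p g h
  have hVar : ∫ y, (S y - n * m) ^ 2 ∂μ = n * (Q - m ^ 2) := by
    have hexp : ∀ y, (S y - n * m) ^ 2
        = (∑ i, ∑ j, g (y i) * g (y j)) - 2 * ((n : ℝ) * m) * S y + ((n : ℝ) * m) ^ 2 := by
      intro y
      rw [← Finset.sum_mul_sum]
      simp only [hSdef]; ring
    have hSSint : Integrable (fun y => ∑ i, ∑ j : Fin n, g (y i) * g (y j)) μ :=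
      integrable_finset_sum _ (fun i _ => integrable_finset_sum _ (fun j _ => hintpair i j))
    have hAint : Integrable
        (fun y => (∑ i, ∑ j : Fin n, g (y i) * g (y j)) - 2 * ((n : ℝ) * m) * S y) μ :=
      hSSint.sub (hSint.const_mul _)
    calc ∫ y, (S y - n * m) ^ 2 ∂μ
        = ∫ y, ((∑ i, ∑ j, g (y i) * g (y j)) - 2 * ((n : ℝ) * m) * S y + ((n : ℝ) * m) ^ 2) ∂μ := by
          exact integral_congr_ae (Filter.Eventually.of_forall fun y => hexp y)
      _ = (∫ y, ((∑ i, ∑ j, g (y i) * g (y j)) - 2 * ((n : ℝ) * m) * S y) ∂μ) + ((n : ℝ) * m) ^ 2 := by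
          rw [integral_add hAint (integrable_const _)]
          simp
      _ = (∑ i, ∑ j : Fin n, ∫ y, g (y i) * g (y j) ∂μ) - 2 * ((n : ℝ) * m) * (n * m)
            + ((n : ℝ) * m) ^ 2 := by
          have hmul : Integrable (fun y => 2 * ((n : ℝ) * m) * S y) μ := hSint.const_mul _
          rw [integral_sub hSSint hmul, integral_const_mul, hS1,
            integral_finset_sum _ (fun i _ => integrable_finset_sum _ (fun j _ => hintpair i j))]
          congr 1
          congr 1
          exact Finset.sum_congr rfl fun i _ =>
            integral_finset_sum _ (fun j _ => hintpair i j)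
      _ = n * (Q - m ^ 2) := by
          simp only [hpair]
          have hrow : ∀ i : Fin n, (∑ j : Fin n, if i = j then Q else m * m)
              = Q + ((n : ℝ) - 1) * (m * m) := by
            intro i
            have : ∀ j : Fin n, (if i = j then Q else m * m)
                = m * m + (if i = j then Q - m * m else 0) := fun j => by split_ifs <;> ring
            simp only [this]
            rw [Finset.sum_add_distrib, Finset.sum_ite_eq, Finset.sum_const]
            simp; ring
          simp only [hrow, Finset.sum_const, Finset.card_univ, Fintype.card_fin, nsmul_eq_mul]
          ring
  have hVar_ub : ∫ y, (S y - n * m) ^ 2 ∂μ ≤ n * eC ^ 2 := by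
    rw [hVar]; nlinarith [sq_nonneg m]
  have hVarInt : Integrable (fun y => (S y - n * m) ^ 2) μ := by
    refine bt_integrable_of_bound ((hSmeas.sub measurable_const).pow_const 2)
      (((n : ℝ) * eC + n * m) ^ 2) (fun y => ?_)
    rw [abs_pow]
    refine pow_le_pow_left₀ (abs_nonneg _) (abs_le.2 ⟨?_, ?_⟩) 2
    · nlinarith [hS_pos y, hm0, hn0, heC0]
    · nlinarith [hS_ub y, hm0, hn0]
  set T := c + (n : ℝ) * m with hTdef
  have hT0 : 0 < T := by
    rw [hTdef]
    nlinarith [mul_pos hn0 hm0]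
  have hd : ∀ y, 0 < c + S y := fun y => by linarith [hS_pos y]
  have hhmeas : Measurable (fun y => (K : ℝ) * c / (c + S y)) :=
    measurable_const.div (measurable_const.add hSmeas)
  have hhint : Integrable (fun y => (K : ℝ) * c / (c + S y)) μ := by
    refine bt_integrable_of_bound hhmeas ((K : ℝ) * c / c) (fun y => ?_)
    have hKc : (0 : ℝ) ≤ (K : ℝ) * c := mul_nonneg (Nat.cast_nonneg K) hc.le
    rw [abs_of_nonneg (div_nonneg hKc (hd y).le)]
    exact div_le_div_of_nonneg_left hKc hc (by linarith [hS_pos y])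
  set f3 : (Fin n → X) → ℝ := fun y => (K : ℝ) * c * (S y - n * m) ^ 2 / (T ^ 2 * (c + S y))
    with hf3def
  have hident : ∀ y, (K : ℝ) * c / (c + S y)
      = (K : ℝ) * c / T - ((K : ℝ) * c / T ^ 2) * (S y - n * m) + f3 y := by
    intro y
    have h1 : c + S y ≠ 0 := (hd y).ne'
    have h2 : T ≠ 0 := hT0.ne'
    simp only [hf3def]
    field_simp
    ring
  have hf3int : Integrable f3 μ := by
    have : f3 = fun y => ((K : ℝ) * c / (c + S y) - (K : ℝ) * c / T)
        + ((K : ℝ) * c / T ^ 2) * (S y - n * m) := by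
      funext y; rw [hident y]; ring
    rw [this]
    exact (hhint.sub (integrable_const _)).add ((hSint.sub (integrable_const _)).const_mul _)
  have hmain : ∫ y, (K : ℝ) * c / (c + S y) ∂μ = (K : ℝ) * c / T + ∫ y, f3 y ∂μ := by
    calc ∫ y, (K : ℝ) * c / (c + S y) ∂μ
        = ∫ y, ((K : ℝ) * c / T - ((K : ℝ) * c / T ^ 2) * (S y - n * m) + f3 y) ∂μ :=
          integral_congr_ae (Filter.Eventually.of_forall fun y => hident y)
      _ = (K : ℝ) * c / T - ((K : ℝ) * c / T ^ 2) * ((∫ y, S y ∂μ) - n * m) + ∫ y, f3 y ∂μ := by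
          have hd1 : Integrable (fun y : Fin n → X => S y - (n : ℝ) * m) μ :=
            hSint.sub (integrable_const _)
          have hd2 : Integrable
              (fun y : Fin n → X => ((K : ℝ) * c / T ^ 2) * (S y - (n : ℝ) * m)) μ :=
            hd1.const_mul _
          have hd3 : Integrable
              (fun y : Fin n → X => (K : ℝ) * c / T - ((K : ℝ) * c / T ^ 2) * (S y - (n : ℝ) * m))
              μ := (integrable_const _).sub hd2
          rw [integral_add hd3 hf3int, integral_sub (integrable_const _) hd2,
            integral_const_mul, integral_sub hSint (integrable_const _)]
          simp
      _ = (K : ℝ) * c / T + ∫ y, f3 y ∂μ := by rw [hS1]; ring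
  have hf30 : 0 ≤ ∫ y, f3 y ∂μ := by
    refine integral_nonneg fun y => ?_
    exact div_nonneg (mul_nonneg (mul_nonneg (Nat.cast_nonneg K) hc.le) (sq_nonneg _))
      (mul_nonneg (sq_nonneg T) (hd y).le)
  have hf3ub : ∫ y, f3 y ∂μ ≤ (K : ℝ) * c * eC ^ 3 / T ^ 2 := by
    have hcoeff : (0 : ℝ) ≤ (K : ℝ) * c * eC / ((n : ℝ) * T ^ 2) :=
      div_nonneg (mul_nonneg (mul_nonneg (Nat.cast_nonneg K) hc.le) heC0.le)
        (mul_nonneg hn0.le (sq_nonneg T))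
    have hpt : ∀ y, f3 y ≤ ((K : ℝ) * c * eC / ((n : ℝ) * T ^ 2)) * (S y - n * m) ^ 2 := by
      intro y
      have h1 : T ^ 2 * ((n : ℝ) * eC⁻¹) ≤ T ^ 2 * (c + S y) :=
        mul_le_mul_of_nonneg_left (le_trans (hS_lb y) (by linarith)) (sq_nonneg T)
      calc f3 y ≤ (K : ℝ) * c * (S y - n * m) ^ 2 / (T ^ 2 * ((n : ℝ) * eC⁻¹)) :=
            div_le_div_of_nonneg_left
              (mul_nonneg (mul_nonneg (Nat.cast_nonneg K) hc.le) (sq_nonneg _))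
              (mul_pos (pow_pos hT0 2) (mul_pos hn0 (inv_pos.2 heC0))) h1
        _ = ((K : ℝ) * c * eC / ((n : ℝ) * T ^ 2)) * (S y - n * m) ^ 2 := by
            field_simp
    calc ∫ y, f3 y ∂μ
        ≤ ∫ y, ((K : ℝ) * c * eC / ((n : ℝ) * T ^ 2)) * (S y - n * m) ^ 2 ∂μ :=
          integral_mono hf3int (hVarInt.const_mul _)
            (fun y => hpt y)
      _ = ((K : ℝ) * c * eC / ((n : ℝ) * T ^ 2)) * ∫ y, (S y - n * m) ^ 2 ∂μ :=
          integral_const_mul _ _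
      _ ≤ ((K : ℝ) * c * eC / ((n : ℝ) * T ^ 2)) * ((n : ℝ) * eC ^ 2) :=
          mul_le_mul_of_nonneg_left hVar_ub hcoeff
      _ = (K : ℝ) * c * eC ^ 3 / T ^ 2 := by field_simp
  constructor
  · rw [hmain]; linarith
  · rw [hmain]; linarith

/-- **large-K concentration of curation weights.**  For a bounded
measurable reward `r` and a probability density `p` on `𝒳 ⊆ ℝ^d`, the Bradley–Terry
curation weight converges pointwise to the exponential tilt:
`H^{K,r}_p(x) → e^{r(x)} / E_{y∼p}[e^{r(y)}]` as `K → ∞`. -/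
theorem btWeight_tendsto_tilt {d : ℕ}
    (p : Measure (EuclideanSpace ℝ (Fin d))) [IsProbabilityMeasure p]
    (r : EuclideanSpace ℝ (Fin d) → ℝ) (hr : Measurable r)
    (C : ℝ) (hbdd : ∀ x, |r x| ≤ C) :
    ∀ x, Tendsto (fun K : ℕ => btWeight p r K x) atTop
      (nhds (Real.exp (r x) / ∫ y, Real.exp (r y) ∂p)) := by
  intro x
  set g : EuclideanSpace ℝ (Fin d) → ℝ := fun y => Real.exp (r y) with hgdef
  have hg : Measurable g := Real.measurable_exp.comp hr
  have hC0 : 0 ≤ C := le_trans (abs_nonneg _) (hbdd x)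
  set eC : ℝ := Real.exp C with heCdef
  have heC : 1 ≤ eC := Real.one_le_exp hC0
  have heC0 : (0 : ℝ) < eC := lt_of_lt_of_le one_pos heC
  have hlb : ∀ t, eC⁻¹ ≤ g t := by
    intro t
    rw [heCdef, ← Real.exp_neg]
    exact Real.exp_le_exp.2 (neg_le_of_abs_le (hbdd t))
  have hub : ∀ t, g t ≤ eC := fun t => Real.exp_le_exp.2 (le_of_abs_le (hbdd t))
  set c : ℝ := Real.exp (r x) with hcdef
  have hc : 0 < c := Real.exp_pos _
  set m : ℝ := ∫ t, g t ∂p with hmdef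
  have hgint : Integrable g p := by
    refine Integrable.mono' (integrable_const eC) hg.aestronglyMeasurable
      (Filter.Eventually.of_forall fun t => ?_)
    rw [Real.norm_eq_abs, abs_of_pos (Real.exp_pos _)]
    exact hub t
  have hm_lb : eC⁻¹ ≤ m := by
    rw [hmdef]
    calc eC⁻¹ = ∫ _, eC⁻¹ ∂p := by simp
    _ ≤ ∫ t, g t ∂p := integral_mono (integrable_const _) hgint hlb
  have hm0 : 0 < m := lt_of_lt_of_le (inv_pos.2 heC0) hm_lb
  -- the bounding sequences
  set A : ℕ → ℝ := fun K => (K : ℝ) * c / (c + ((K - 1 : ℕ) : ℝ) * m) with hAdef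
  set B : ℕ → ℝ := fun K => (K : ℝ) * c * eC ^ 3 / (c + ((K - 1 : ℕ) : ℝ) * m) ^ 2 with hBdef
  have hDpos : ∀ K : ℕ, 0 < c + ((K - 1 : ℕ) : ℝ) * m := by
    intro K
    have : (0 : ℝ) ≤ ((K - 1 : ℕ) : ℝ) * m := mul_nonneg (Nat.cast_nonneg _) hm0.le
    linarith
  have hbounds : ∀ᶠ K : ℕ in atTop, A K ≤ btWeight p r K x ∧ btWeight p r K x ≤ A K + B K := by
    filter_upwards [eventually_ge_atTop 2] with K hK
    have hn : 1 ≤ K - 1 := Nat.le_sub_one_of_lt (by omega)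
    have hb := bt_key_bounds p g hg eC heC hlb hub c hc K (K - 1) hn
    have hbt : btWeight p r K x
        = ∫ y : Fin (K - 1) → EuclideanSpace ℝ (Fin d),
            (K : ℝ) * c / (c + ∑ j, g (y j)) ∂(Measure.pi fun _ => p) := rfl
    rw [hbt]
    exact ⟨hb.1, hb.2⟩
  -- limits
  have hcast : ∀ᶠ K : ℕ in atTop, ((K - 1 : ℕ) : ℝ) = (K : ℝ) - 1 := by
    filter_upwards [eventually_ge_atTop 1] with K hK
    rw [Nat.cast_sub hK, Nat.cast_one]
  have hDtop : Tendsto (fun K : ℕ => c + ((K - 1 : ℕ) : ℝ) * m) atTop atTop := by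
    apply tendsto_atTop_add_const_left
    apply Tendsto.atTop_mul_const hm0
    exact tendsto_natCast_atTop_atTop.comp (tendsto_sub_atTop_nat 1)
  have hA : Tendsto A atTop (nhds (c / m)) := by
    have h1 : Tendsto (fun K : ℕ => c * (K : ℝ)⁻¹ + (1 - (K : ℝ)⁻¹) * m) atTop (nhds m) := by
      have h2 : Tendsto (fun K : ℕ => (K : ℝ)⁻¹) atTop (nhds 0) :=
        tendsto_inv_atTop_nhds_zero_nat
      have hc' : Tendsto (fun K : ℕ => c * (K : ℝ)⁻¹) atTop (nhds 0) := by
        simpa using h2.const_mul c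
      have h4 : Tendsto (fun K : ℕ => 1 - (K : ℝ)⁻¹) atTop (nhds 1) := by
        simpa using (tendsto_const_nhds : Tendsto (fun _ : ℕ => (1 : ℝ)) atTop (nhds 1)).sub h2
      have hm' : Tendsto (fun K : ℕ => (1 - (K : ℝ)⁻¹) * m) atTop (nhds m) := by
        simpa using h4.mul_const m
      simpa using hc'.add hm' 
    have h3 : Tendsto (fun K : ℕ => c / (c * (K : ℝ)⁻¹ + (1 - (K : ℝ)⁻¹) * m)) atTop
        (nhds (c / m)) := tendsto_const_nhds.div h1 hm0.ne'
    refine Tendsto.congr' ?_ h3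
    filter_upwards [hcast, eventually_ge_atTop 1] with K hK1 hK2
    have hK0 : (0 : ℝ) < (K : ℝ) := by exact_mod_cast hK2
    have hX : c * (K : ℝ)⁻¹ + (1 - (K : ℝ)⁻¹) * m = (c + ((K : ℝ) - 1) * m) / K := by
      field_simp <;> ring
    rw [hAdef]
    simp only
    rw [hK1, hX, div_div_eq_mul_div, mul_comm c (K : ℝ)]
  have hBeq : ∀ K : ℕ, B K = A K * (eC ^ 3 / (c + ((K - 1 : ℕ) : ℝ) * m)) := by
    intro K
    rw [hAdef, hBdef]
    simp only
    rw [div_mul_div_comm, ← pow_two]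
  have hB : Tendsto B atTop (nhds 0) := by
    have h0 : Tendsto (fun K : ℕ => eC ^ 3 / (c + ((K - 1 : ℕ) : ℝ) * m)) atTop (nhds 0) :=
      Tendsto.div_atTop tendsto_const_nhds hDtop
    have h1 := hA.mul h0
    rw [mul_zero] at h1
    exact h1.congr fun K => (hBeq K).symm
  have hupper : Tendsto (fun K : ℕ => A K + B K) atTop (nhds (c / m)) := by
    simpa using hA.add hB
  exact tendsto_of_tendsto_of_tendsto_of_le_of_le' hA hupper
    (hbounds.mono fun K h => h.1) (hbounds.mono fun K h => h.2)
end

section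
/- Let r : 𝒳 → ℝ be measurable with r_min ≤ r(x) ≤ r_max for all x, set A := e^{r_min}, B := e^{r_max}, and let p be a probability density on 𝒳. Then there exist constants C_1, C_2 > 0 depending only on A and B such that, for all K ≥ 3 and all x ∈ 𝒳, |H^{K,r}_p(x) − H^{∞,r}_p(x)| ≤ C_1·√(log K / K) + C_2 / K. -/
open MeasureTheory Filter Set

section helpers
lemma pi_integral_prod {ι X : Type*} [Fintype ι] [MeasurableSpace X] (p : Measure X)
    [SigmaFinite p] (f : ι → X → ℝ) :
    ∫ y : ι → X, ∏ i, f i (y i) ∂(Measure.pi fun _ => p) = ∏ i, ∫ x, f i x ∂p := by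
  letI : MeasureSpace X := ⟨p⟩
  haveI : SigmaFinite (volume : Measure X) := ‹_›
  exact MeasureTheory.integral_fintype_prod_eq_prod (μ := fun _ => p) f

lemma pi_integral_eval {ι X : Type*} [Fintype ι] [DecidableEq ι] [MeasurableSpace X]
    (p : Measure X) [IsProbabilityMeasure p] (g : X → ℝ) (j : ι) :
    ∫ y : ι → X, g (y j) ∂(Measure.pi fun _ => p) = ∫ x, g x ∂p := by
  have h := pi_integral_prod p (fun i => if i = j then g else fun _ => (1:ℝ))
  have hL : ∀ y : ι → X,
      (∏ i, (if i = j then g else fun _ => (1:ℝ)) (y i)) = g (y j) := by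
    intro y
    rw [Finset.prod_eq_single j]
    · simp
    · intro i _ hij; simp [hij]
    · simp
  have hR : (∏ i, ∫ x, (if i = j then g else fun _ => (1:ℝ)) x ∂p) = ∫ x, g x ∂p := by
    rw [Finset.prod_eq_single j]
    · simp
    · intro i _ hij; simp [hij]
    · simp
  simp only [hL, hR] at h
  exact h

lemma pi_integral_eval_two {ι X : Type*} [Fintype ι] [DecidableEq ι] [MeasurableSpace X]
    (p : Measure X) [IsProbabilityMeasure p] (g : X → ℝ) {i j : ι} (hij : i ≠ j) :
    ∫ y : ι → X, g (y i) * g (y j) ∂(Measure.pi fun _ => p)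
      = (∫ x, g x ∂p) * (∫ x, g x ∂p) := by
  have key : ∀ (h : ι → ℝ), (∀ k, k ≠ i → k ≠ j → h k = 1) → ∏ k, h k = h i * h j := by
    intro h hh
    have hi : i ∈ (Finset.univ : Finset ι) := Finset.mem_univ i
    have hj : j ∈ (Finset.univ : Finset ι).erase i := by
      simp [Finset.mem_erase, hij.symm]
    rw [← Finset.mul_prod_erase _ _ hi, ← Finset.mul_prod_erase _ _ hj,
      Finset.prod_eq_one, mul_one]
    intro k hk
    simp only [Finset.mem_erase] at hk
    exact hh k hk.2.1 hk.1
  have h := pi_integral_prod p (fun k => if k = i ∨ k = j then g else fun _ => (1:ℝ))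
  have hL : ∀ y : ι → X,
      (∏ k, (if k = i ∨ k = j then g else fun _ => (1:ℝ)) (y k)) = g (y i) * g (y j) := by
    intro y
    rw [key _ (fun k hki hkj => by simp [hki, hkj])]
    simp [hij]
  have hR : (∏ k, ∫ x, (if k = i ∨ k = j then g else fun _ => (1:ℝ)) x ∂p)
      = (∫ x, g x ∂p) * (∫ x, g x ∂p) := by
    rw [key _ (fun k hki hkj => by simp [hki, hkj])]
    simp [hij]
  simp only [hL, hR] at h
  exact h

lemma bt_integrable_of_bound_s3 {Ω : Type*} [MeasurableSpace Ω] (ν : Measure Ω) [IsFiniteMeasure ν]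
    (f : Ω → ℝ) (C : ℝ) (hf : Measurable f) (hb : ∀ ω, |f ω| ≤ C) : Integrable f ν :=
  (integrable_const C).mono' hf.aestronglyMeasurable
    (ae_of_all _ fun ω => by simpa [Real.norm_eq_abs] using hb ω)

lemma bt_integral_abs_le_sqrt {Ω : Type*} [MeasurableSpace Ω] (ν : Measure Ω)
    [IsProbabilityMeasure ν] (f : Ω → ℝ) (C : ℝ) (hf : Measurable f) (hb : ∀ ω, |f ω| ≤ C) :
    ∫ ω, |f ω| ∂ν ≤ Real.sqrt (∫ ω, (f ω)^2 ∂ν) := by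
  have hm : MemLp (fun ω => |f ω|) 2 ν :=
    MemLp.of_bound hf.abs.aestronglyMeasurable C
      (ae_of_all _ fun ω => by simpa [Real.norm_eq_abs] using hb ω)
  have hv := ProbabilityTheory.variance_nonneg (fun ω => |f ω|) ν
  rw [ProbabilityTheory.variance_eq_sub hm] at hv
  have he : (∫ ω, ((fun ω => |f ω|)^2) ω ∂ν) = ∫ ω, (f ω)^2 ∂ν := by
    congr 1; ext ω; simp [sq_abs]
  rw [Real.le_sqrt (integral_nonneg fun ω => abs_nonneg _)]
  simp only [he] at hv
  linarith
  · exact integral_nonneg fun ω => sq_nonneg _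
end helpers

set_option maxHeartbeats 1000000 in
/-- **finite-K approximation.**  Let `r` be measurable with
`r_min ≤ r ≤ r_max` (so `A := e^{r_min}`, `B := e^{r_max}`).  There exist constants
`C₁, C₂ > 0` depending only on `A` and `B` (equivalently, only on `r_min, r_max`) such
that for every probability density `p`, every such reward `r`, all `K ≥ 3` and all `x`,
`|H^{K,r}_p(x) − e^{r(x)} / E_p[e^r]| ≤ C₁ √(log K / K) + C₂ / K`. -/
theorem btWeight_finiteK_bound (rmin rmax : ℝ) (hle : rmin ≤ rmax) :
    ∃ C₁ > (0 : ℝ), ∃ C₂ > (0 : ℝ),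
      ∀ (d : ℕ) (p : Measure (EuclideanSpace ℝ (Fin d))), IsProbabilityMeasure p →
      ∀ (r : EuclideanSpace ℝ (Fin d) → ℝ), Measurable r →
      (∀ x, rmin ≤ r x ∧ r x ≤ rmax) →
      ∀ K : ℕ, 3 ≤ K → ∀ x,
        |btWeight p r K x - Real.exp (r x) / ∫ y, Real.exp (r y) ∂p|
          ≤ C₁ * Real.sqrt (Real.log K / K) + C₂ / K := by
  set A := Real.exp rmin with hAdef
  set B := Real.exp rmax with hBdef
  have hA : 0 < A := Real.exp_pos _
  have hB : 0 < B := Real.exp_pos _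
  have hAB : A ≤ B := Real.exp_le_exp.mpr hle
  refine ⟨B^2/A^2, by positivity, B^2/A^2, by positivity, ?_⟩
  intro d p hp r hr hbd K hK x
  set n := K - 1 with hndef
  set PP : Measure (Fin n → EuclideanSpace ℝ (Fin d)) := Measure.pi (fun _ => p) with hPP
  haveI : IsProbabilityMeasure PP := by rw [hPP]; infer_instance
  have hk3 : (3:ℝ) ≤ (K:ℝ) := by exact_mod_cast hK
  have hk0 : (0:ℝ) < K := by linarith
  have hnK : ((n:ℕ):ℝ) = (K:ℝ) - 1 := by
    rw [hndef, Nat.cast_sub (by omega)]; simp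
  have hEb : ∀ t, A ≤ Real.exp (r t) ∧ Real.exp (r t) ≤ B := fun t =>
    ⟨Real.exp_le_exp.mpr (hbd t).1, Real.exp_le_exp.mpr (hbd t).2⟩
  set a := Real.exp (r x) with hadef
  set μ := ∫ y, Real.exp (r y) ∂p with hμdef
  have intexp : Integrable (fun t => Real.exp (r t)) p :=
    bt_integrable_of_bound_s3 p _ B hr.exp
      (fun t => by rw [abs_of_pos (Real.exp_pos _)]; exact (hEb t).2)
  have hμA : A ≤ μ := by
    calc A = ∫ _, A ∂p := by simp
    _ ≤ μ := integral_mono (integrable_const A) intexp (fun t => (hEb t).1)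
  have hμB : μ ≤ B := by
    calc μ ≤ ∫ _, B ∂p := integral_mono intexp (integrable_const B) (fun t => (hEb t).2)
    _ = B := by simp
  have hμ0 : 0 < μ := lt_of_lt_of_le hA hμA
  -- coordinate functions
  set Z : Fin n → (Fin n → EuclideanSpace ℝ (Fin d)) → ℝ :=
    fun j y => Real.exp (r (y j)) with hZdef
  set S : (Fin n → EuclideanSpace ℝ (Fin d)) → ℝ := fun y => ∑ j, Z j y with hSdef
  have hZm : ∀ j, Measurable (Z j) := fun j => (hr.comp (measurable_pi_apply j)).exp
  have hZb : ∀ j y, A ≤ Z j y ∧ Z j y ≤ B := fun j y => hEb (y j)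
  have hSm : Measurable S := Finset.measurable_sum _ (fun j _ => hZm j)
  have hSlb : ∀ y, ((n:ℕ):ℝ) * A ≤ S y := by
    intro y
    calc ((n:ℕ):ℝ) * A = ∑ _j : Fin n, A := by
          rw [Finset.sum_const, Finset.card_univ, Fintype.card_fin, nsmul_eq_mul]
    _ ≤ S y := Finset.sum_le_sum (fun j _ => (hZb j y).1)
  have hSub : ∀ y, S y ≤ ((n:ℕ):ℝ) * B := by
    intro y
    calc S y ≤ ∑ _j : Fin n, B := Finset.sum_le_sum (fun j _ => (hZb j y).2)
    _ = ((n:ℕ):ℝ) * B := by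
          rw [Finset.sum_const, Finset.card_univ, Fintype.card_fin, nsmul_eq_mul]
  have hSnn : ∀ y, 0 ≤ S y := fun y => le_trans (by positivity) (hSlb y)
  have hdenlb : ∀ y, (K:ℝ) * A ≤ a + S y := by
    intro y
    have h1 := hSlb y
    have h2 : ((n:ℕ):ℝ) * A = (K:ℝ) * A - A := by rw [hnK]; ring
    have h3 : A ≤ a := (hEb x).1
    linarith
  have hden : ∀ y, 0 < a + S y := fun y => lt_of_lt_of_le (by positivity) (hdenlb y)
  -- btWeight as integral of g
  set g : (Fin n → EuclideanSpace ℝ (Fin d)) → ℝ := fun y => (K:ℝ) * a / (a + S y) with hgdef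
  have hbt : btWeight p r K x = ∫ y, g y ∂PP := rfl
  have hgm : Measurable g := Measurable.div measurable_const (measurable_const.add hSm)
  have hgb : ∀ y, |g y| ≤ B / A := by
    intro y
    rw [hgdef, abs_of_nonneg (by positivity)]
    have h1 : (K:ℝ) * a / (a + S y) ≤ (K:ℝ) * B / ((K:ℝ) * A) :=
      div_le_div₀ (by positivity : (0:ℝ) ≤ (K:ℝ) * B)
        (mul_le_mul_of_nonneg_left (hEb x).2 hk0.le)
        (by positivity : (0:ℝ) < (K:ℝ) * A) (hdenlb y)
    rw [mul_div_mul_left _ _ (ne_of_gt hk0)] at h1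
    exact h1
  -- deviation function
  set D : (Fin n → EuclideanSpace ℝ (Fin d)) → ℝ := fun y => (K:ℝ) * μ - a - S y with hDdef
  have hDm : Measurable D := (measurable_const.sub hSm)
  have hDb : ∀ y, |D y| ≤ 2 * (K:ℝ) * B + B := by
    intro y
    simp only [hDdef]
    rw [abs_le]
    constructor
    · have := hSub y
      have h2 : ((n:ℕ):ℝ) * B = (K:ℝ) * B - B := by rw [hnK]; ring
      have h3 : 0 ≤ (K:ℝ) * μ := by positivity
      have h4 : a ≤ B := (hEb x).2
      nlinarith
    · have := hSnn y
      have h4 : 0 < a := Real.exp_pos _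
      nlinarith [mul_le_mul_of_nonneg_left hμB hk0.le]
  set c0 : ℝ := B / (A * ((K:ℝ) * A)) with hc0def
  have hpt : ∀ y, |g y - a / μ| ≤ c0 * |D y| := by
    intro y
    have hd0 : a + S y ≠ 0 := ne_of_gt (hden y)
    have hid : g y - a / μ = a * D y / (μ * (a + S y)) := by
      rw [hgdef, hDdef]
      field_simp
      ring
    rw [hid, abs_div, abs_mul, abs_of_pos (Real.exp_pos _),
      abs_of_pos (by positivity : (0:ℝ) < μ * (a + S y))]
    have h1 : a * |D y| / (μ * (a + S y)) ≤ B * |D y| / (A * ((K:ℝ) * A)) :=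
      div_le_div₀ (by positivity : (0:ℝ) ≤ B * |D y|)
        (mul_le_mul_of_nonneg_right (hEb x).2 (abs_nonneg _))
        (by positivity : (0:ℝ) < A * ((K:ℝ) * A))
        (mul_le_mul hμA (hdenlb y) (by positivity : (0:ℝ) ≤ (K:ℝ) * A)
          (le_trans hA.le hμA))
    rw [hc0def, div_mul_eq_mul_div]
    exact h1
  -- integral comparison
  have hint_g : Integrable g PP := bt_integrable_of_bound_s3 PP g (B/A) hgm hgb
  have hint_D : Integrable D PP := bt_integrable_of_bound_s3 PP D _ hDm hDb
  have hsub : btWeight p r K x - a / μ = ∫ y, (g y - a / μ) ∂PP := by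
    rw [hbt, integral_sub hint_g (integrable_const _), integral_const]
    simp
  have step1 : |btWeight p r K x - a / μ| ≤ c0 * (∫ y, |D y| ∂PP) := by
    rw [hsub]
    calc |∫ y, (g y - a / μ) ∂PP| ≤ ∫ y, |g y - a / μ| ∂PP := by
          simpa [Real.norm_eq_abs] using
            norm_integral_le_integral_norm (μ := PP) (fun y => g y - a / μ)
    _ ≤ ∫ y, c0 * |D y| ∂PP :=
      integral_mono (hint_g.sub (integrable_const _)).abs
        (hint_D.abs.const_mul c0) (fun y => hpt y)
    _ = c0 * (∫ y, |D y| ∂PP) := integral_const_mul _ _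
  -- second moment computation
  set m2 : ℝ := ∫ t, (Real.exp (r t))^2 ∂p with hm2def
  have intm2 : Integrable (fun t => (Real.exp (r t))^2) p :=
    bt_integrable_of_bound_s3 p _ (B^2) (hr.exp.pow_const 2)
      (fun t => by
        rw [abs_of_nonneg (sq_nonneg _)]
        exact pow_le_pow_left₀ (Real.exp_pos _).le (hEb t).2 2)
  have hm2B : m2 ≤ B^2 := by
    have h := integral_mono intm2 (integrable_const (B^2))
      (fun t => pow_le_pow_left₀ (Real.exp_pos _).le (hEb t).2 2)
    simpa using h
  have hiZ : ∀ j, ∫ y, Z j y ∂PP = μ := fun j =>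
    pi_integral_eval p (fun t => Real.exp (r t)) j
  have hint_Z : ∀ j, Integrable (Z j) PP := fun j =>
    bt_integrable_of_bound_s3 PP (Z j) B (hZm j)
      (fun y => by rw [abs_of_pos (Real.exp_pos _)]; exact (hZb j y).2)
  have hiS : ∫ y, S y ∂PP = ((n:ℕ):ℝ) * μ := by
    rw [hSdef]
    rw [integral_finset_sum _ (fun j _ => hint_Z j)]
    simp only [hiZ]
    rw [Finset.sum_const, Finset.card_univ, Fintype.card_fin, nsmul_eq_mul]
  have hint_ZZ : ∀ i j, Integrable (fun y => Z i y * Z j y) PP := fun i j =>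
    bt_integrable_of_bound_s3 PP _ (B * B) ((hZm i).mul (hZm j))
      (fun y => by
        rw [abs_of_nonneg (by positivity)]
        exact mul_le_mul (hZb i y).2 (hZb j y).2 (Real.exp_pos _).le hB.le)
  have hiZZ : ∀ i j : Fin n, ∫ y, Z i y * Z j y ∂PP = if i = j then m2 else μ * μ := by
    intro i j
    by_cases h : i = j
    · subst h
      rw [if_pos rfl, hm2def]
      have := pi_integral_eval (ι := Fin n) p (fun t => (Real.exp (r t))^2) i
      rw [← this]
      congr 1
      ext y
      rw [hZdef]
      ring
    · rw [if_neg h]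
      exact pi_integral_eval_two p (fun t => Real.exp (r t)) h
  have hiS2 : ∫ y, (S y)^2 ∂PP
      = ((n:ℕ):ℝ) * m2 + ((n:ℕ):ℝ) * (((n:ℕ):ℝ) - 1) * (μ * μ) := by
    have hexp : ∀ y, (S y)^2 = ∑ i, ∑ j, Z i y * Z j y := by
      intro y; rw [hSdef, sq, Finset.sum_mul_sum]
    simp_rw [hexp]
    rw [integral_finset_sum _ (fun i _ => integrable_finset_sum _ (fun j _ => hint_ZZ i j))]
    have : ∀ i : Fin n, (∫ y, ∑ j, Z i y * Z j y ∂PP) = m2 + (((n:ℕ):ℝ) - 1) * (μ * μ) := by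
      intro i
      rw [integral_finset_sum _ (fun j _ => hint_ZZ i j)]
      simp only [hiZZ]
      have hsplit : ∀ j : Fin n,
          (if i = j then m2 else μ * μ) = (if i = j then m2 - μ * μ else 0) + μ * μ := by
        intro j; by_cases h : i = j <;> simp [h]
      simp_rw [hsplit]
      rw [Finset.sum_add_distrib, Finset.sum_ite_eq, Finset.sum_const, Finset.card_univ,
        Fintype.card_fin, if_pos (Finset.mem_univ i), nsmul_eq_mul]
      ring
    simp_rw [this]
    rw [Finset.sum_const, Finset.card_univ, Fintype.card_fin, nsmul_eq_mul]
    ring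
  have hint_S : Integrable S PP :=
    bt_integrable_of_bound_s3 PP S (((n:ℕ):ℝ) * B) hSm
      (fun y => by rw [abs_of_nonneg (hSnn y)]; exact hSub y)
  have hint_S2 : Integrable (fun y => (S y)^2) PP :=
    bt_integrable_of_bound_s3 PP _ ((((n:ℕ):ℝ) * B)^2) (hSm.pow_const 2)
      (fun y => by
        rw [abs_of_nonneg (sq_nonneg _)]
        exact pow_le_pow_left₀ (hSnn y) (hSub y) 2)
  set c : ℝ := (K:ℝ) * μ - a with hcdef
  have hD2 : ∫ y, (D y)^2 ∂PP = (μ - a)^2 + ((n:ℕ):ℝ) * (m2 - μ * μ) := by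
    have hDexp : ∀ y, (D y)^2 = (c^2 - 2*c*(S y)) + (S y)^2 := by
      intro y; rw [hDdef, hcdef]; ring
    simp_rw [hDexp]
    have hint1 : Integrable (fun y => 2*c*(S y)) PP := hint_S.const_mul (2*c)
    have hf : Integrable (fun y => c^2 - 2*c*(S y)) PP :=
      (integrable_const (c^2)).sub hint1
    rw [integral_add hf hint_S2, integral_sub (integrable_const (c^2)) hint1,
      integral_const, integral_const_mul, hiS, hiS2]
    have hcc : c = (K:ℝ) * μ - a := hcdef
    have hnn : ((n:ℕ):ℝ) = (K:ℝ) - 1 := hnK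
    rw [hcc, hnn]
    simp [measure_univ]
    ring
  have hD2le : ∫ y, (D y)^2 ∂PP ≤ (K:ℝ) * B^2 := by
    rw [hD2, hnK]
    have h1 : A ≤ a := (hEb x).1
    have h2 : a ≤ B := (hEb x).2
    nlinarith [sq_nonneg μ, sq_nonneg (μ - a), mul_self_nonneg μ, hμA, hμB, hm2B, hA, hAB, hk3]
  -- Cauchy-Schwarz
  have step2 : ∫ y, |D y| ∂PP ≤ Real.sqrt ((K:ℝ) * B^2) := by
    calc ∫ y, |D y| ∂PP ≤ Real.sqrt (∫ y, (D y)^2 ∂PP) :=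
      bt_integral_abs_le_sqrt PP D _ hDm hDb
    _ ≤ Real.sqrt ((K:ℝ) * B^2) := Real.sqrt_le_sqrt hD2le
  have hsqrtKB : Real.sqrt ((K:ℝ) * B^2) = Real.sqrt (K:ℝ) * B := by
    rw [Real.sqrt_mul hk0.le, Real.sqrt_sq hB.le]
  -- putting it together
  have main : |btWeight p r K x - a / μ| ≤ (B^2 / A^2) * (Real.sqrt (K:ℝ) / (K:ℝ)) := by
    calc |btWeight p r K x - a / μ| ≤ c0 * (∫ y, |D y| ∂PP) := step1
    _ ≤ c0 * (Real.sqrt (K:ℝ) * B) := by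
        rw [← hsqrtKB]
        exact mul_le_mul_of_nonneg_left step2 (by rw [hc0def]; positivity)
    _ = (B^2 / A^2) * (Real.sqrt (K:ℝ) / (K:ℝ)) := by
        rw [hc0def]
        field_simp
  -- log bound
  have hlog : 1 ≤ Real.log (K:ℝ) := by
    have h3 : (1:ℝ) ≤ Real.log 3 := by
      rw [Real.le_log_iff_exp_le (by norm_num : (0:ℝ) < 3)]
      have := Real.exp_one_lt_d9
      linarith
    calc (1:ℝ) ≤ Real.log 3 := h3
    _ ≤ Real.log (K:ℝ) := Real.log_le_log (by norm_num) hk3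
  have hsk : 0 < Real.sqrt (K:ℝ) := Real.sqrt_pos.mpr hk0
  have hratio : Real.sqrt (K:ℝ) / (K:ℝ) ≤ Real.sqrt (Real.log (K:ℝ) / (K:ℝ)) := by
    have h1 : Real.sqrt (K:ℝ) / (K:ℝ) = Real.sqrt (1 / (K:ℝ)) := by
      rw [one_div, Real.sqrt_inv, Real.sqrt_div_self', one_div]
    rw [h1]
    apply Real.sqrt_le_sqrt
    exact (div_le_div_iff_of_pos_right hk0).mpr hlog
  have hCK : (0:ℝ) < (B^2/A^2) / K := by positivity
  calc |btWeight p r K x - a / μ| ≤ (B^2 / A^2) * (Real.sqrt (K:ℝ) / (K:ℝ)) := main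
  _ ≤ (B^2 / A^2) * Real.sqrt (Real.log (K:ℝ) / (K:ℝ)) :=
      mul_le_mul_of_nonneg_left hratio (by positivity)
  _ ≤ (B^2 / A^2) * Real.sqrt (Real.log (K:ℝ) / (K:ℝ)) + (B^2/A^2) / K := by linarith
end

section
/- Fix ε > 0 and let p be a probability measure on 𝒳 with p(S_{1,ε}) = a, p(S_{2,ε}) = b, p(𝒳 ∖ (S_{1,ε} ∪ S_{2,ε})) = m, where S_{1,ε} and S_{2,ε} are disjoint. Let r_1 be bounded with sup r_1 = r_1^*, r_1(x) ≥ r_1^* − ε on S_{1,ε}, and r_1(x) ≤ r_1^* − Δ_1 + ε on S_{2,ε} for some Δ_1 > 2ε. Let p^{(1)} be the exponentially tilted measure p^{(1)}(A) := (∫_A e^{r_1} dp)/(∫_𝒳 e^{r_1} dp). Then there exists a constant C_ε > 0 depending only on ε such that p^{(1)}(S_{1,ε}) ≥ a / ( a + κ_1·b + C_ε·m ), where κ_1 := exp(−(Δ_1 − 2ε)). -/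
open MeasureTheory Filter Set

/-- **leakage lower bound for the exponential tilt.**  Fix `ε > 0`.
There is a constant `C_ε > 0` depending only on `ε` such that: for any probability
measure `p` on `𝒳 ⊆ ℝ^d` with `p(S₁) = a`, `p(S₂) = b`, `p(𝒳 ∖ (S₁ ∪ S₂)) = m`
(`S₁, S₂` disjoint), and any bounded reward `r₁` with supremum `r₁^*` satisfying
`r₁ ≥ r₁^* − ε` on `S₁` and `r₁ ≤ r₁^* − Δ₁ + ε` on `S₂` for some `Δ₁ > 2ε`,
the exponentially tilted measure `p^{(1)}(A) := (∫_A e^{r₁} dp)/(∫ e^{r₁} dp)`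
satisfies `p^{(1)}(S₁) ≥ a / (a + κ₁ b + C_ε m)` with `κ₁ := exp(−(Δ₁ − 2ε))`. -/
theorem tilt_basin_mass_lower_bound (ε : ℝ) (hε : 0 < ε) :
    ∃ C > (0 : ℝ),
      ∀ (d : ℕ) (p : Measure (EuclideanSpace ℝ (Fin d))), IsProbabilityMeasure p →
      ∀ (S1 S2 : Set (EuclideanSpace ℝ (Fin d))),
        MeasurableSet S1 → MeasurableSet S2 → Disjoint S1 S2 →
      ∀ (r1 : EuclideanSpace ℝ (Fin d) → ℝ), Measurable r1 →
        BddAbove (Set.range r1) →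
      ∀ (r1star : ℝ), r1star = sSup (Set.range r1) →
      ∀ (Δ1 : ℝ), 2 * ε < Δ1 →
      (∀ x ∈ S1, r1star - ε ≤ r1 x) →
      (∀ x ∈ S2, r1 x ≤ r1star - Δ1 + ε) →
      ∀ a b m : ℝ,
        a = (p S1).toReal → b = (p S2).toReal → m = (p (S1 ∪ S2)ᶜ).toReal →
        a / (a + Real.exp (-(Δ1 - 2 * ε)) * b + C * m)
          ≤ (∫ x in S1, Real.exp (r1 x) ∂p) / (∫ x, Real.exp (r1 x) ∂p) := by
  refine ⟨Real.exp ε, Real.exp_pos ε, ?_⟩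
  intro d p hp S1 S2 hS1 hS2 hdis r1 hr1 hbdd r1star hstar Δ1 hΔ hlow hhigh a b m ha hb hm
  -- basic facts
  have hub : ∀ x, r1 x ≤ r1star := by
    intro x; rw [hstar]; exact le_csSup hbdd ⟨x, rfl⟩
  have hInt : Integrable (fun x => Real.exp (r1 x)) p := by
    refine Integrable.mono' (integrable_const (Real.exp r1star))
      (hr1.exp).aestronglyMeasurable (ae_of_all _ fun x => ?_)
    rw [Real.norm_eq_abs, abs_of_pos (Real.exp_pos _)]
    exact Real.exp_le_exp.2 (hub x)
  set f : EuclideanSpace ℝ (Fin d) → ℝ := fun x => Real.exp (r1 x) with hf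
  set I1 := ∫ x in S1, f x ∂p with hI1
  set I2 := ∫ x in S2, f x ∂p with hI2
  set I0 := ∫ x in (S1 ∪ S2)ᶜ, f x ∂p with hI0
  set T := ∫ x, f x ∂p with hT
  set E := Real.exp (r1star - ε) with hE
  set κ := Real.exp (-(Δ1 - 2 * ε)) with hκ
  have hEpos : 0 < E := Real.exp_pos _
  have hκpos : 0 < κ := Real.exp_pos _
  have ha0 : 0 ≤ a := ha ▸ ENNReal.toReal_nonneg
  have hb0 : 0 ≤ b := hb ▸ ENNReal.toReal_nonneg
  have hm0 : 0 ≤ m := hm ▸ ENNReal.toReal_nonneg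
  -- T positive
  have hTpos : 0 < T := by
    rw [hT, hf]
    rw [integral_pos_iff_support_of_nonneg (fun x => (Real.exp_pos _).le) hInt]
    have : Function.support (fun x => Real.exp (r1 x)) = Set.univ := by
      ext x; simp [Function.support, (Real.exp_pos (r1 x)).ne']
    rw [this]
    simp [hp.measure_univ]
  -- split T
  have hsplit : T = I1 + I2 + I0 := by
    have h1 : (∫ x in S1, f x ∂p) + (∫ x in S1ᶜ, f x ∂p) = T :=
      integral_add_compl hS1 hInt
    have hset : S1ᶜ = S2 ∪ (S1 ∪ S2)ᶜ := by
      ext x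
      simp only [mem_compl_iff, mem_union]
      constructor
      · intro hx
        by_cases h2 : x ∈ S2
        · exact Or.inl h2
        · exact Or.inr (by simp [hx, h2])
      · rintro (h2 | h2)
        · exact fun h1 => hdis.le_bot ⟨h1, h2⟩
        · exact fun h => h2 (mem_union_left _ h)

    have h2 : (∫ x in S1ᶜ, f x ∂p) = I2 + I0 := by
      rw [hset]
      exact setIntegral_union (disjoint_compl_right.mono_left (subset_union_right))
        (hS1.union hS2).compl hInt.integrableOn hInt.integrableOn
    linarith
  -- bounds
  have hI1low : a * E ≤ I1 := by
    have : (∫ x in S1, E ∂p) ≤ I1 := by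
      refine setIntegral_mono_on (integrableOn_const (measure_lt_top p S1).ne)
        hInt.integrableOn hS1 (fun x hx => ?_)
      exact Real.exp_le_exp.2 (hlow x hx)
    rwa [setIntegral_const, smul_eq_mul, measureReal_def, ← ha] at this
  have hI2high : I2 ≤ κ * E * b := by
    have : I2 ≤ ∫ x in S2, Real.exp (r1star - Δ1 + ε) ∂p := by
      refine setIntegral_mono_on hInt.integrableOn
        (integrableOn_const (measure_lt_top p S2).ne) hS2 (fun x hx => ?_)
      exact Real.exp_le_exp.2 (hhigh x hx)
    rw [setIntegral_const, smul_eq_mul, measureReal_def, ← hb] at this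
    have heq : κ * E = Real.exp (r1star - Δ1 + ε) := by
      rw [hκ, hE, ← Real.exp_add]; ring_nf
    rw [heq]; linarith [this]
  have hI0high : I0 ≤ Real.exp ε * E * m := by
    have : I0 ≤ ∫ x in (S1 ∪ S2)ᶜ, Real.exp r1star ∂p := by
      refine setIntegral_mono_on hInt.integrableOn
        (integrableOn_const (measure_lt_top p _).ne)
        (hS1.union hS2).compl (fun x hx => ?_)
      exact Real.exp_le_exp.2 (hub x)
    rw [setIntegral_const, smul_eq_mul, measureReal_def, ← hm] at this
    have heq : Real.exp ε * E = Real.exp r1star := by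
      rw [hE, ← Real.exp_add]; ring_nf
    rw [heq]; linarith [this]
  have hI10 : 0 ≤ I1 := setIntegral_nonneg hS1 (fun x _ => (Real.exp_pos _).le)
  -- case split on a
  rcases eq_or_lt_of_le ha0 with h | hapos
  · rw [← h]
    simp only [zero_div]
    exact div_nonneg hI10 hTpos.le
  · have hD : 0 < a + κ * b + Real.exp ε * m := by
      have : 0 ≤ κ * b := mul_nonneg hκpos.le hb0
      have : 0 ≤ Real.exp ε * m := mul_nonneg (Real.exp_pos _).le hm0
      linarith [mul_nonneg hκpos.le hb0]
    rw [div_le_div_iff₀ hD hTpos, hsplit]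
    have k1 : κ * b * (a * E) ≤ κ * b * I1 :=
      mul_le_mul_of_nonneg_left hI1low (mul_nonneg hκpos.le hb0)
    have k2 : Real.exp ε * m * (a * E) ≤ Real.exp ε * m * I1 :=
      mul_le_mul_of_nonneg_left hI1low (mul_nonneg (Real.exp_pos _).le hm0)
    have k3 : a * I2 ≤ a * (κ * E * b) := mul_le_mul_of_nonneg_left hI2high ha0
    have k4 : a * I0 ≤ a * (Real.exp ε * E * m) := mul_le_mul_of_nonneg_left hI0high ha0
    nlinarith [k1, k2, k3, k4]
end

section
/- Work in the large-K pluralistic update regime with q ∈ (0,1) and fix ε > 0. Assume S_{1,ε} ∩ S_{2,ε} = ∅, and that there exist Δ_1, Δ_2 > 2ε with: x ∈ S_{1,ε} ⟹ r_1(x) ≥ r_1^* − ε and r_2(x) ≤ r_2^* − Δ_2 + ε, and x ∈ S_{2,ε} ⟹ r_2(x) ≥ r_2^* − ε and r_1(x) ≤ r_1^* − Δ_1 + ε. Set κ_1 := exp(−(Δ_1 − 2ε)) and κ_2 := exp(−(Δ_2 − 2ε)). If m_t → 0 and a_t := p_t(S_{1,ε}) converges to a_∞ ∈ (0,1), then max{0,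 (q − κ_1)/(1 − κ_1)} ≤ a_∞ ≤ min{1, q/(1 − κ_2)}. Moreover, as Δ_1, Δ_2 → ∞ (so κ_1, κ_2 → 0), this interval collapses to the single point a_∞ = q. -/
open MeasureTheory Filter Set

/-- **leakage-controlled limiting basin mass.**  In the large-K
pluralistic update regime with `q ∈ (0,1)`, ε-basins
`S_{i,ε} = {x : r_i(x) ≥ r_i^* − ε}` disjoint, and separation gaps `Δ₁, Δ₂ > 2ε`
(so the leakage factors `κᵢ := exp(−(Δᵢ − 2ε)) ∈ (0,1)`): if the outside mass
`m_t → 0` and `a_t := p_t(S_{1,ε})` converges to `a_∞ ∈ (0,1)`, then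
`max{0, (q−κ₁)/(1−κ₁)} ≤ a_∞ ≤ min{1, q/(1−κ₂)}`.  Moreover, as `Δ₁, Δ₂ → ∞`
(so `κ₁, κ₂ → 0`) this interval collapses to the single point `q`. -/
theorem leakage_controlled_basin_mass {d : ℕ}
    (r1 r2 : EuclideanSpace ℝ (Fin d) → ℝ)
    (hm1 : Measurable r1) (hm2 : Measurable r2)
    (C : ℝ) (hb1 : ∀ x, |r1 x| ≤ C) (hb2 : ∀ x, |r2 x| ≤ C)
    (q : ℝ) (hq : q ∈ Set.Ioo (0 : ℝ) 1)
    (p : ℕ → Measure (EuclideanSpace ℝ (Fin d)))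
    (hprob : ∀ t, IsProbabilityMeasure (p t))
    (W : ℕ → EuclideanSpace ℝ (Fin d) → ℝ)
    (hW : ∀ t x, W t x =
      q * Real.exp (r1 x) / (∫ y, Real.exp (r1 y) ∂(p t)) +
      (1 - q) * Real.exp (r2 x) / (∫ y, Real.exp (r2 y) ∂(p t)))
    (hupdate : ∀ t, p (t + 1) = (p t).withDensity (fun x => ENNReal.ofReal (W t x)))
    (ε : ℝ) (hε : 0 < ε)
    (r1star r2star : ℝ)
    (hr1star : r1star = sSup (Set.range r1)) (hr2star : r2star = sSup (Set.range r2))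
    (S1 S2 : Set (EuclideanSpace ℝ (Fin d)))
    (hS1 : S1 = {x | r1star - ε ≤ r1 x}) (hS2 : S2 = {x | r2star - ε ≤ r2 x})
    (hdisj : Disjoint S1 S2)
    (Δ1 Δ2 : ℝ) (hΔ1 : 2 * ε < Δ1) (hΔ2 : 2 * ε < Δ2)
    (hsep1 : ∀ x ∈ S2, r1 x ≤ r1star - Δ1 + ε)
    (hsep2 : ∀ x ∈ S1, r2 x ≤ r2star - Δ2 + ε)
    (hm : Tendsto (fun t => ((p t) (S1 ∪ S2)ᶜ).toReal) atTop (nhds 0))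
    (aLim : ℝ) (haLim : aLim ∈ Set.Ioo (0 : ℝ) 1)
    (ha : Tendsto (fun t => ((p t) S1).toReal) atTop (nhds aLim)) :
    (max 0 ((q - Real.exp (-(Δ1 - 2 * ε))) / (1 - Real.exp (-(Δ1 - 2 * ε)))) ≤ aLim ∧
      aLim ≤ min 1 (q / (1 - Real.exp (-(Δ2 - 2 * ε))))) ∧
    -- as the separation gaps grow, the two endpoints of the interval tend to `q`,
    -- i.e. the interval collapses to the point `a_∞ = q`
    Tendsto (fun Δ : ℝ =>
        max 0 ((q - Real.exp (-(Δ - 2 * ε))) / (1 - Real.exp (-(Δ - 2 * ε)))))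
      atTop (nhds q) ∧
    Tendsto (fun Δ : ℝ => min 1 (q / (1 - Real.exp (-(Δ - 2 * ε))))) atTop (nhds q) := by
  have hκ : Tendsto (fun Δ : ℝ => Real.exp (-(Δ - 2 * ε))) atTop (nhds 0) := by
    apply Real.tendsto_exp_atBot.comp
    have h1 : Tendsto (fun Δ : ℝ => Δ - 2 * ε) atTop atTop :=
      tendsto_atTop_add_const_right _ (-(2*ε)) tendsto_id |>.congr (by intro x; simp only [id_eq]; ring)
    exact tendsto_neg_atTop_atBot.comp h1
  have hq0 := hq.1
  have hq1 := hq.2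
  have hmaxT : Tendsto (fun Δ : ℝ =>
      max 0 ((q - Real.exp (-(Δ - 2 * ε))) / (1 - Real.exp (-(Δ - 2 * ε)))))
      atTop (nhds q) := by
    have hd : ContinuousAt (fun k : ℝ => (q - k) / (1 - k)) 0 :=
      ContinuousAt.div (by fun_prop) (by fun_prop) (by norm_num)
    have hc : ContinuousAt (fun k : ℝ => max 0 ((q - k) / (1 - k))) 0 :=
      continuousAt_const.sup hd
    have h2 := hc.tendsto.comp hκ
    simpa [Function.comp_def, max_eq_right hq0.le] using h2
  have hminT : Tendsto (fun Δ : ℝ => min 1 (q / (1 - Real.exp (-(Δ - 2 * ε)))))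
      atTop (nhds q) := by
    have hd : ContinuousAt (fun k : ℝ => q / (1 - k)) 0 :=
      ContinuousAt.div (by fun_prop) (by fun_prop) (by norm_num)
    have hc : ContinuousAt (fun k : ℝ => min 1 (q / (1 - k))) 0 :=
      continuousAt_const.inf hd
    have h2 := hc.tendsto.comp hκ
    simpa [Function.comp_def, min_eq_right hq1.le] using h2
  refine ⟨?_, hmaxT, hminT⟩
  -- measurability of the basins
  have hS1m : MeasurableSet S1 := by rw [hS1]; exact measurableSet_le measurable_const hm1
  have hS2m : MeasurableSet S2 := by rw [hS2]; exact measurableSet_le measurable_const hm2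
  have hSm : MeasurableSet (S1 ∪ S2) := hS1m.union hS2m
  set κ1 := Real.exp (-(Δ1 - 2 * ε)) with hκ1def
  set κ2 := Real.exp (-(Δ2 - 2 * ε)) with hκ2def
  have hκ1pos : 0 < κ1 := Real.exp_pos _
  have hκ2pos : 0 < κ2 := Real.exp_pos _
  have hκ1lt : κ1 < 1 := by
    rw [hκ1def]; exact Real.exp_lt_one_iff.2 (by linarith)
  have hκ2lt : κ2 < 1 := by
    rw [hκ2def]; exact Real.exp_lt_one_iff.2 (by linarith)
  -- integrability of the exponentials
  have hint1 : ∀ t, Integrable (fun x => Real.exp (r1 x)) (p t) := by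
    intro t
    haveI := hprob t
    refine ⟨(Real.measurable_exp.comp hm1).aestronglyMeasurable, ?_⟩
    refine HasFiniteIntegral.of_bounded (C := Real.exp C) (ae_of_all _ fun x => ?_)
    rw [Real.norm_eq_abs, abs_of_pos (Real.exp_pos _)]
    exact Real.exp_le_exp.2 ((abs_le.1 (hb1 x)).2)
  have hint2 : ∀ t, Integrable (fun x => Real.exp (r2 x)) (p t) := by
    intro t
    haveI := hprob t
    refine ⟨(Real.measurable_exp.comp hm2).aestronglyMeasurable, ?_⟩
    refine HasFiniteIntegral.of_bounded (C := Real.exp C) (ae_of_all _ fun x => ?_)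
    rw [Real.norm_eq_abs, abs_of_pos (Real.exp_pos _)]
    exact Real.exp_le_exp.2 ((abs_le.1 (hb2 x)).2)
  -- the normalisation constants
  set Z1 : ℕ → ℝ := fun t => ∫ y, Real.exp (r1 y) ∂ p t with hZ1def
  set Z2 : ℕ → ℝ := fun t => ∫ y, Real.exp (r2 y) ∂ p t with hZ2def
  have hZ1lb : ∀ t, Real.exp (-C) ≤ Z1 t := by
    intro t
    haveI := hprob t
    calc Real.exp (-C) = ∫ _y, Real.exp (-C) ∂ p t := by simp
    _ ≤ Z1 t := integral_mono (integrable_const _) (hint1 t)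
        (fun y => Real.exp_le_exp.2 (neg_le_of_abs_le (hb1 y)))
  have hZ2lb : ∀ t, Real.exp (-C) ≤ Z2 t := by
    intro t
    haveI := hprob t
    calc Real.exp (-C) = ∫ _y, Real.exp (-C) ∂ p t := by simp
    _ ≤ Z2 t := integral_mono (integrable_const _) (hint2 t)
        (fun y => Real.exp_le_exp.2 (neg_le_of_abs_le (hb2 y)))
  have hZ1pos : ∀ t, 0 < Z1 t := fun t => lt_of_lt_of_le (Real.exp_pos _) (hZ1lb t)
  have hZ2pos : ∀ t, 0 < Z2 t := fun t => lt_of_lt_of_le (Real.exp_pos _) (hZ2lb t)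
  -- the basin masses
  set A : ℕ → ℝ := fun t => ((p t) S1).toReal with hAdef
  set B : ℕ → ℝ := fun t => ((p t) S2).toReal with hBdef
  set M : ℕ → ℝ := fun t => ((p t) (S1 ∪ S2)ᶜ).toReal with hMdef
  have hAnn : ∀ t, 0 ≤ A t := fun t => ENNReal.toReal_nonneg
  have hBnn : ∀ t, 0 ≤ B t := fun t => ENNReal.toReal_nonneg
  have hMnn : ∀ t, 0 ≤ M t := fun t => ENNReal.toReal_nonneg
  have hAle1 : ∀ t, A t ≤ 1 := by
    intro t
    haveI := hprob t
    have h1 : (p t) S1 ≤ 1 := prob_le_one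
    calc A t ≤ (1 : ENNReal).toReal := ENNReal.toReal_mono ENNReal.one_ne_top h1
    _ = 1 := ENNReal.toReal_one
  -- the master update formula
  have key : ∀ t, ∀ s : Set (EuclideanSpace ℝ (Fin d)), MeasurableSet s →
      ((p (t+1)) s).toReal
        = (q / Z1 t) * (∫ x in s, Real.exp (r1 x) ∂ p t)
          + ((1 - q) / Z2 t) * (∫ x in s, Real.exp (r2 x) ∂ p t) := by
    intro t s hs
    have hWdef : ∀ x, W t x
        = (q / Z1 t) * Real.exp (r1 x) + ((1 - q) / Z2 t) * Real.exp (r2 x) := by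
      intro x
      rw [hW]
      simp only [hZ1def, hZ2def]
      ring
    have hWnn : ∀ x, 0 ≤ W t x := by
      intro x
      rw [hWdef]
      exact add_nonneg
        (mul_nonneg (div_nonneg hq0.le (hZ1pos t).le) (Real.exp_pos _).le)
        (mul_nonneg (div_nonneg (by linarith) (hZ2pos t).le) (Real.exp_pos _).le)
    have hWfun : W t = fun x =>
        (q / Z1 t) * Real.exp (r1 x) + ((1 - q) / Z2 t) * Real.exp (r2 x) := funext hWdef
    have hWm : Measurable (W t) := by
      rw [hWfun]
      exact ((Real.measurable_exp.comp hm1).const_mul _).add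
        ((Real.measurable_exp.comp hm2).const_mul _)
    rw [hupdate t, withDensity_apply _ hs]
    rw [← integral_eq_lintegral_of_nonneg_ae (ae_of_all _ hWnn) hWm.aestronglyMeasurable]
    rw [hWfun]
    rw [integral_add ((hint1 t).integrableOn.const_mul _) ((hint2 t).integrableOn.const_mul _)]
    rw [integral_const_mul, integral_const_mul]
  -- nonnegativity of set integrals
  have hnn : ∀ t, ∀ s : Set (EuclideanSpace ℝ (Fin d)), MeasurableSet s →
      ∀ g : EuclideanSpace ℝ (Fin d) → ℝ,
      0 ≤ ∫ x in s, Real.exp (g x) ∂ p t :=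
    fun t s hs g => setIntegral_nonneg hs (fun x _ => (Real.exp_pos _).le)
  -- pointwise set-integral bounds
  have hE1S1lb : ∀ t, A t * Real.exp (r1star - ε) ≤ ∫ x in S1, Real.exp (r1 x) ∂ p t := by
    intro t
    have h := setIntegral_mono_on
      (f := fun _ => Real.exp (r1star - ε)) (g := fun x => Real.exp (r1 x))
      (integrableOn_const (measure_ne_top _ _)) (hint1 t).integrableOn hS1m
      (fun x hx => Real.exp_le_exp.2 (by rw [hS1] at hx; exact hx))
    simpa [setIntegral_const, smul_eq_mul, hAdef, measureReal_def] using h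
  have hE2S2lb : ∀ t, B t * Real.exp (r2star - ε) ≤ ∫ x in S2, Real.exp (r2 x) ∂ p t := by
    intro t
    have h := setIntegral_mono_on
      (f := fun _ => Real.exp (r2star - ε)) (g := fun x => Real.exp (r2 x))
      (integrableOn_const (measure_ne_top _ _)) (hint2 t).integrableOn hS2m
      (fun x hx => Real.exp_le_exp.2 (by rw [hS2] at hx; exact hx))
    simpa [setIntegral_const, smul_eq_mul, hBdef, measureReal_def] using h
  have hE1S2ub : ∀ t, (∫ x in S2, Real.exp (r1 x) ∂ p t) ≤ B t * Real.exp (r1star - Δ1 + ε) := by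
    intro t
    have h := setIntegral_mono_on
      (f := fun x => Real.exp (r1 x)) (g := fun _ => Real.exp (r1star - Δ1 + ε))
      (hint1 t).integrableOn (integrableOn_const (measure_ne_top _ _)) hS2m
      (fun x hx => Real.exp_le_exp.2 (hsep1 x hx))
    simpa [setIntegral_const, smul_eq_mul, hBdef, measureReal_def] using h
  have hE2S1ub : ∀ t, (∫ x in S1, Real.exp (r2 x) ∂ p t) ≤ A t * Real.exp (r2star - Δ2 + ε) := by
    intro t
    have h := setIntegral_mono_on
      (f := fun x => Real.exp (r2 x)) (g := fun _ => Real.exp (r2star - Δ2 + ε))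
      (hint2 t).integrableOn (integrableOn_const (measure_ne_top _ _)) hS1m
      (fun x hx => Real.exp_le_exp.2 (hsep2 x hx))
    simpa [setIntegral_const, smul_eq_mul, hAdef, measureReal_def] using h
  have hE1outub : ∀ t, (∫ x in (S1 ∪ S2)ᶜ, Real.exp (r1 x) ∂ p t) ≤ M t * Real.exp C := by
    intro t
    have h := setIntegral_mono_on
      (f := fun x => Real.exp (r1 x)) (g := fun _ => Real.exp C)
      (hint1 t).integrableOn (integrableOn_const (measure_ne_top _ _)) hSm.compl
      (fun x _ => Real.exp_le_exp.2 ((abs_le.1 (hb1 x)).2))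
    simpa [setIntegral_const, smul_eq_mul, hMdef, measureReal_def] using h
  have hE1S1ubZ : ∀ t, (∫ x in S1, Real.exp (r1 x) ∂ p t) ≤ Z1 t := fun t =>
    setIntegral_le_integral (hint1 t) (ae_of_all _ fun x => (Real.exp_pos _).le)
  -- splitting of Z1
  have hsplit : ∀ t, Z1 t = (∫ x in S1, Real.exp (r1 x) ∂ p t)
      + (∫ x in S2, Real.exp (r1 x) ∂ p t)
      + (∫ x in (S1 ∪ S2)ᶜ, Real.exp (r1 x) ∂ p t) := by
    intro t
    have h1 : (∫ x in S1 ∪ S2, Real.exp (r1 x) ∂ p t)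
        = (∫ x in S1, Real.exp (r1 x) ∂ p t) + (∫ x in S2, Real.exp (r1 x) ∂ p t) :=
      setIntegral_union hdisj hS2m (hint1 t).integrableOn (hint1 t).integrableOn
    have h2 : (∫ x in S1 ∪ S2, Real.exp (r1 x) ∂ p t)
        + (∫ x in (S1 ∪ S2)ᶜ, Real.exp (r1 x) ∂ p t) = Z1 t :=
      integral_add_compl hSm (hint1 t)
    rw [← h2, h1]
  -- the two master inequalities
  have hA1 : ∀ t, A (t+1) = (q / Z1 t) * (∫ x in S1, Real.exp (r1 x) ∂ p t)
      + ((1 - q) / Z2 t) * (∫ x in S1, Real.exp (r2 x) ∂ p t) := fun t => key t S1 hS1m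
  have hB1 : ∀ t, B (t+1) = (q / Z1 t) * (∫ x in S2, Real.exp (r1 x) ∂ p t)
      + ((1 - q) / Z2 t) * (∫ x in S2, Real.exp (r2 x) ∂ p t) := fun t => key t S2 hS2m
  have hIneq1 : ∀ t, B t * A (t+1) ≤ B t * q + κ2 * A t * B (t+1) := by
    intro t
    have hZ1p := hZ1pos t
    have hZ2p := hZ2pos t
    have exp2 : Real.exp (r2star - Δ2 + ε) = κ2 * Real.exp (r2star - ε) := by
      rw [hκ2def, ← Real.exp_add]; ring_nf
    have step1 : (q / Z1 t) * (∫ x in S1, Real.exp (r1 x) ∂ p t) ≤ q := by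
      rw [div_mul_eq_mul_div, div_le_iff₀ hZ1p]
      calc q * (∫ x in S1, Real.exp (r1 x) ∂ p t) ≤ q * Z1 t :=
        mul_le_mul_of_nonneg_left (hE1S1ubZ t) hq0.le
      _ = q * Z1 t := rfl
    have step2 : ((1 - q) / Z2 t) * (∫ x in S2, Real.exp (r2 x) ∂ p t) ≤ B (t+1) := by
      rw [hB1 t]
      have h0 : 0 ≤ (q / Z1 t) * (∫ x in S2, Real.exp (r1 x) ∂ p t) :=
        mul_nonneg (div_nonneg hq0.le hZ1p.le) (hnn t S2 hS2m r1)
      linarith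
    have step3 : B t * (∫ x in S1, Real.exp (r2 x) ∂ p t)
        ≤ κ2 * A t * (∫ x in S2, Real.exp (r2 x) ∂ p t) := by
      calc B t * (∫ x in S1, Real.exp (r2 x) ∂ p t)
          ≤ B t * (A t * Real.exp (r2star - Δ2 + ε)) :=
            mul_le_mul_of_nonneg_left (hE2S1ub t) (hBnn t)
      _ = κ2 * A t * (B t * Real.exp (r2star - ε)) := by rw [exp2]; ring
      _ ≤ κ2 * A t * (∫ x in S2, Real.exp (r2 x) ∂ p t) :=
            mul_le_mul_of_nonneg_left (hE2S2lb t) (mul_nonneg hκ2pos.le (hAnn t))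
    calc B t * A (t+1)
        = B t * ((q / Z1 t) * (∫ x in S1, Real.exp (r1 x) ∂ p t))
          + ((1 - q) / Z2 t) * (B t * (∫ x in S1, Real.exp (r2 x) ∂ p t)) := by
          rw [hA1 t]; ring
    _ ≤ B t * q + ((1 - q) / Z2 t) * (κ2 * A t * (∫ x in S2, Real.exp (r2 x) ∂ p t)) :=
          add_le_add (mul_le_mul_of_nonneg_left step1 (hBnn t))
            (mul_le_mul_of_nonneg_left step3 (div_nonneg (by linarith) hZ2p.le))
    _ = B t * q + κ2 * A t * (((1 - q) / Z2 t) * (∫ x in S2, Real.exp (r2 x) ∂ p t)) := by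
          ring
    _ ≤ B t * q + κ2 * A t * B (t+1) := by
          have h4 := mul_le_mul_of_nonneg_left step2 (mul_nonneg hκ2pos.le (hAnn t))
          linarith
  have hIneq2 : ∀ t, A t * q ≤ A t * A (t+1) + κ1 * B t * A (t+1)
      + q * Real.exp (2 * C) * M t := by
    intro t
    have hZ1p := hZ1pos t
    have hZ2p := hZ2pos t
    have exp1 : Real.exp (r1star - Δ1 + ε) = κ1 * Real.exp (r1star - ε) := by
      rw [hκ1def, ← Real.exp_add]; ring_nf
    have hu : (q / Z1 t) * (∫ x in S1, Real.exp (r1 x) ∂ p t) ≤ A (t+1) := by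
      rw [hA1 t]
      have h0 : 0 ≤ ((1 - q) / Z2 t) * (∫ x in S1, Real.exp (r2 x) ∂ p t) :=
        mul_nonneg (div_nonneg (by linarith) hZ2p.le) (hnn t S1 hS1m r2)
      linarith
    have hunn : 0 ≤ (q / Z1 t) * (∫ x in S1, Real.exp (r1 x) ∂ p t) :=
      mul_nonneg (div_nonneg hq0.le hZ1p.le) (hnn t S1 hS1m r1)
    have piece1 : A t * ((q / Z1 t) * (∫ x in S1, Real.exp (r1 x) ∂ p t))
        ≤ A t * A (t+1) := mul_le_mul_of_nonneg_left hu (hAnn t)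
    have piece2 : A t * ((q / Z1 t) * (∫ x in S2, Real.exp (r1 x) ∂ p t))
        ≤ κ1 * B t * A (t+1) := by
      have h5 : A t * (∫ x in S2, Real.exp (r1 x) ∂ p t)
          ≤ κ1 * B t * (∫ x in S1, Real.exp (r1 x) ∂ p t) := by
        calc A t * (∫ x in S2, Real.exp (r1 x) ∂ p t)
            ≤ A t * (B t * Real.exp (r1star - Δ1 + ε)) :=
              mul_le_mul_of_nonneg_left (hE1S2ub t) (hAnn t)
        _ = κ1 * B t * (A t * Real.exp (r1star - ε)) := by rw [exp1]; ring
        _ ≤ κ1 * B t * (∫ x in S1, Real.exp (r1 x) ∂ p t) :=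
              mul_le_mul_of_nonneg_left (hE1S1lb t) (mul_nonneg hκ1pos.le (hBnn t))
      calc A t * ((q / Z1 t) * (∫ x in S2, Real.exp (r1 x) ∂ p t))
          = (q / Z1 t) * (A t * (∫ x in S2, Real.exp (r1 x) ∂ p t)) := by ring
      _ ≤ (q / Z1 t) * (κ1 * B t * (∫ x in S1, Real.exp (r1 x) ∂ p t)) :=
            mul_le_mul_of_nonneg_left h5 (div_nonneg hq0.le hZ1p.le)
      _ = κ1 * B t * ((q / Z1 t) * (∫ x in S1, Real.exp (r1 x) ∂ p t)) := by ring
      _ ≤ κ1 * B t * A (t+1) :=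
            mul_le_mul_of_nonneg_left hu (mul_nonneg hκ1pos.le (hBnn t))
    have piece3 : A t * ((q / Z1 t) * (∫ x in (S1 ∪ S2)ᶜ, Real.exp (r1 x) ∂ p t))
        ≤ q * Real.exp (2 * C) * M t := by
      have hinv : 1 / Z1 t ≤ Real.exp C := by
        rw [div_le_iff₀ hZ1p]
        calc (1 : ℝ) = Real.exp C * Real.exp (-C) := by
              rw [← Real.exp_add]; simp
        _ ≤ Real.exp C * Z1 t :=
              mul_le_mul_of_nonneg_left (hZ1lb t) (Real.exp_pos _).le
      have h6 : (∫ x in (S1 ∪ S2)ᶜ, Real.exp (r1 x) ∂ p t) ≤ M t * Real.exp C :=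
        hE1outub t
      have h7 : 0 ≤ (∫ x in (S1 ∪ S2)ᶜ, Real.exp (r1 x) ∂ p t) := hnn t _ hSm.compl r1
      have h8 : (q / Z1 t) = q * (1 / Z1 t) := by ring
      have h9 : (q / Z1 t) ≤ q * Real.exp C := by
        rw [h8]; exact mul_le_mul_of_nonneg_left hinv hq0.le
      have h10 : Real.exp (2 * C) = Real.exp C * Real.exp C := by
        rw [← Real.exp_add]; ring_nf
      have c_nn : 0 ≤ q / Z1 t := div_nonneg hq0.le hZ1p.le
      calc A t * ((q / Z1 t) * (∫ x in (S1 ∪ S2)ᶜ, Real.exp (r1 x) ∂ p t))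
          ≤ (q / Z1 t) * (∫ x in (S1 ∪ S2)ᶜ, Real.exp (r1 x) ∂ p t) :=
            mul_le_of_le_one_left (mul_nonneg c_nn h7) (hAle1 t)
      _ ≤ (q * Real.exp C) * (∫ x in (S1 ∪ S2)ᶜ, Real.exp (r1 x) ∂ p t) :=
            mul_le_mul_of_nonneg_right h9 h7
      _ ≤ (q * Real.exp C) * (M t * Real.exp C) :=
            mul_le_mul_of_nonneg_left h6 (mul_nonneg hq0.le (Real.exp_pos _).le)
      _ = q * Real.exp (2 * C) * M t := by rw [h10]; ring
    have hsum : A t * q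
        = A t * ((q / Z1 t) * (∫ x in S1, Real.exp (r1 x) ∂ p t))
        + A t * ((q / Z1 t) * (∫ x in S2, Real.exp (r1 x) ∂ p t))
        + A t * ((q / Z1 t) * (∫ x in (S1 ∪ S2)ᶜ, Real.exp (r1 x) ∂ p t)) := by
      have h0 : (q / Z1 t) * Z1 t = q := div_mul_cancel₀ q hZ1p.ne'
      calc A t * q = A t * ((q / Z1 t) * Z1 t) := by rw [h0]
      _ = _ := by rw [hsplit t]; ring
    linarith
  -- mass conservation and limits
  have hsum1 : ∀ t, A t + B t + M t = 1 := by
    intro t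
    haveI := hprob t
    have h1 : (p t) (S1 ∪ S2) = (p t) S1 + (p t) S2 := measure_union hdisj hS2m
    have h2 : (p t) (S1 ∪ S2) + (p t) (S1 ∪ S2)ᶜ = 1 := by
      rw [measure_add_measure_compl hSm, measure_univ]
    have h3 : ((p t) S1 + (p t) S2) + (p t) (S1 ∪ S2)ᶜ = 1 := by rw [← h1, h2]
    have h4 := congrArg ENNReal.toReal h3
    rw [ENNReal.toReal_add (ENNReal.add_ne_top.2 ⟨measure_ne_top _ _, measure_ne_top _ _⟩)
      (measure_ne_top _ _), ENNReal.toReal_add (measure_ne_top _ _) (measure_ne_top _ _),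
      ENNReal.toReal_one] at h4
    exact h4
  have hbT : Tendsto B atTop (nhds (1 - aLim)) := by
    have hBeq : B = fun t => 1 - A t - M t := funext fun t => by linarith [hsum1 t]
    rw [hBeq]
    have := (tendsto_const_nhds (x := (1:ℝ)) (f := atTop)).sub ha |>.sub hm
    simpa using this
  have haT' : Tendsto (fun t => A (t+1)) atTop (nhds aLim) :=
    ha.comp (tendsto_add_atTop_nat 1)
  have hbT' : Tendsto (fun t => B (t+1)) atTop (nhds (1 - aLim)) :=
    hbT.comp (tendsto_add_atTop_nat 1)
  have lim1 : (1 - aLim) * aLim ≤ (1 - aLim) * q + κ2 * aLim * (1 - aLim) := by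
    refine le_of_tendsto_of_tendsto' (hbT.mul haT') ?_ hIneq1
    exact (hbT.mul tendsto_const_nhds).add ((ha.const_mul κ2).mul hbT')
  have lim2 : aLim * q ≤ aLim * aLim + κ1 * (1 - aLim) * aLim
      + q * Real.exp (2 * C) * 0 := by
    refine le_of_tendsto_of_tendsto' (ha.mul tendsto_const_nhds) ?_ hIneq2
    exact ((ha.mul haT').add ((hbT.const_mul κ1).mul haT')).add (hm.const_mul _)
  have haL0 := haLim.1
  have haL1 := haLim.2
  constructor
  · refine max_le haL0.le ?_
    have hqle : q ≤ aLim + κ1 * (1 - aLim) := by nlinarith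
    rw [div_le_iff₀ (by linarith : (0:ℝ) < 1 - κ1)]
    nlinarith
  · refine le_min haL1.le ?_
    have hqge : aLim * (1 - κ2) ≤ q := by nlinarith
    rw [le_div_iff₀ (by linarith : (0:ℝ) < 1 - κ2)]
    linarith
end

section
/- Let (a_t)_{t≥0} ⊆ [0,1] and (c_t)_{t≥0} ⊆ [0,∞) be real sequences with c_t → 0, and let q ∈ (0,1], κ ∈ [0,1) with q > κ. Suppose a_{t+1} ≥ q·a_t / ( a_t + κ·(1 − a_t) + c_t ) for all t, and a_T > 0 for some T. Then liminf_{t→∞} a_t ≥ (q − κ)/(1 − κ). -/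
open Filter

set_option maxHeartbeats 1600000
set_option maxRecDepth 8000

/-- **scalar non-collapse recursion.**  Let `(a_t) ⊆ [0,1]` and
`(c_t) ⊆ [0,∞)` with `c_t → 0`, and let `q ∈ (0,1]`, `κ ∈ [0,1)` with `q > κ`.
If `a_{t+1} ≥ q a_t / (a_t + κ (1 − a_t) + c_t)` for all `t` and `a_T > 0` for some
`T`, then `liminf_{t→∞} a_t ≥ (q − κ)/(1 − κ)`. -/
theorem scalar_noncollapse_recursion
    (a c : ℕ → ℝ)
    (ha : ∀ t, a t ∈ Set.Icc (0 : ℝ) 1)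
    (hc : ∀ t, 0 ≤ c t)
    (hc0 : Tendsto c atTop (nhds 0))
    (q κ : ℝ) (hq : q ∈ Set.Ioc (0 : ℝ) 1) (hκ : κ ∈ Set.Ico (0 : ℝ) 1)
    (hqκ : κ < q)
    (hrec : ∀ t, q * a t / (a t + κ * (1 - a t) + c t) ≤ a (t + 1))
    (T : ℕ) (hT : 0 < a T) :
    (q - κ) / (1 - κ) ≤ Filter.liminf a atTop := by
  obtain ⟨hq0, hq1⟩ := hq
  obtain ⟨hκ0, hκ1⟩ := hκ
  obtain ⟨L, hLdef⟩ : ∃ x : ℝ, x = (q - κ) / (1 - κ) := ⟨_, rfl⟩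
  rw [← hLdef]
  have h1κ : (0:ℝ) < 1 - κ := by linarith
  have hL0 : 0 < L := by rw [hLdef]; exact div_pos (by linarith) h1κ
  have hLmul : (1 - κ) * L = q - κ := by
    rw [hLdef, mul_div_cancel₀ _ (ne_of_gt h1κ)]
  -- positivity propagates forward from time T
  have hpos : ∀ t, T ≤ t → 0 < a t := by
    intro t ht
    induction t, ht using Nat.le_induction with
    | base => exact hT
    | succ n hn ih =>
      have h0 := (ha n).1
      have h1 := (ha n).2
      have hden : 0 < a n + κ * (1 - a n) + c n := by nlinarith [hc n]
      have hnum : 0 < q * a n := mul_pos hq0 ih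
      exact lt_of_lt_of_le (div_pos hnum hden) (hrec n)
  -- for every ℓ ∈ (0, L), eventually ℓ ≤ a t
  have key : ∀ ℓ : ℝ, 0 < ℓ → ℓ < L → ∀ᶠ t in atTop, ℓ ≤ a t := by
    intro ℓ hℓ0 hℓL
    obtain ⟨cb, hcbdef⟩ : ∃ x : ℝ, x = (1 - κ) * (L - ℓ) / 2 := ⟨_, rfl⟩
    have hcb0 : 0 < cb := by
      have hLl : 0 < L - ℓ := by linarith
      rw [hcbdef]; positivity
    obtain ⟨D, hDdef⟩ : ∃ x : ℝ, x = κ + (1 - κ) * ℓ + cb := ⟨_, rfl⟩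
    have hD0 : 0 < D := by
      have : 0 < (1 - κ) * ℓ := mul_pos h1κ hℓ0
      rw [hDdef]; nlinarith
    have hDq : D < q := by
      have h2 : (1 - κ) * ℓ < (1 - κ) * L := by nlinarith
      rw [hDdef, hcbdef]
      nlinarith
    obtain ⟨ρ, hρdef⟩ : ∃ x : ℝ, x = q / D := ⟨_, rfl⟩
    have hρ1 : 1 < ρ := by rw [hρdef]; exact (one_lt_div hD0).2 hDq
    have hρ0 : 0 < ρ := lt_trans one_pos hρ1
    -- choose N with c t ≤ cb for t ≥ N and N ≥ T
    obtain ⟨N₀, hN₀⟩ := (Filter.eventually_atTop).1 (hc0.eventually_lt_const hcb0)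
    obtain ⟨N, hNdef⟩ : ∃ n : ℕ, n = max N₀ T := ⟨_, rfl⟩
    have hNT : T ≤ N := by rw [hNdef]; exact le_max_right _ _
    have hNc : ∀ t, N ≤ t → c t ≤ cb := by
      intro t ht
      exact le_of_lt (hN₀ t (le_trans (hNdef ▸ le_max_left _ _) ht))
    -- one-step bound
    have hstep : ∀ t, N ≤ t → ρ * min (a t) ℓ ≤ a (t + 1) := by
      intro t ht
      have hat : 0 < a t := hpos t (le_trans hNT ht)
      have h0 := (ha t).1
      have h1 := (ha t).2
      have hct := hNc t ht
      have hct0 := hc t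
      obtain ⟨m, hmdef⟩ : ∃ x : ℝ, x = min (a t) ℓ := ⟨_, rfl⟩
      have hm1 : m ≤ a t := by rw [hmdef]; exact min_le_left _ _
      have hm2 : m ≤ ℓ := by rw [hmdef]; exact min_le_right _ _
      have hm0 : 0 < m := by rw [hmdef]; exact lt_min hat hℓ0
      have hden : 0 < a t + κ * (1 - a t) + c t := by nlinarith
      have hle : q * m / D ≤ q * a t / (a t + κ * (1 - a t) + c t) := by
        rw [div_le_div_iff₀ hD0 hden]
        have e1 : m * κ ≤ a t * κ := by nlinarith
        have e2 : m * ((1 - κ) * a t) ≤ a t * ((1 - κ) * ℓ) := by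
          nlinarith [mul_nonneg (mul_nonneg h1κ.le h0) (sub_nonneg.2 hm2)]
        have e3 : m * c t ≤ a t * cb := by
          nlinarith [mul_nonneg (sub_nonneg.2 hm1) hct0, mul_nonneg h0 (sub_nonneg.2 hct)]
        have expand : q * m * (a t + κ * (1 - a t) + c t)
            = q * (m * κ + m * ((1 - κ) * a t) + m * c t) := by ring
        have expand2 : q * a t * D
            = q * (a t * κ + a t * ((1 - κ) * ℓ) + a t * cb) := by
          rw [hDdef]; ring
        rw [expand, expand2]
        have := hq0.le
        nlinarith
      have hr : ρ * m = q * m / D := by rw [hρdef]; ring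
      rw [← hmdef, hr]
      exact le_trans hle (hrec t)
    -- geometric growth claim
    obtain ⟨m₀, hm₀def⟩ : ∃ x : ℝ, x = min (a N) ℓ := ⟨_, rfl⟩
    have haN : 0 < m₀ := by rw [hm₀def]; exact lt_min (hpos N hNT) hℓ0
    have stay : ∀ t, N ≤ t → ℓ ≤ a t → ℓ ≤ a (t + 1) := by
      intro t ht hℓa
      have hs := hstep t ht
      rw [min_eq_right hℓa] at hs
      nlinarith
    have growth : ∀ k : ℕ, ℓ ≤ a (N + k) ∨ m₀ * ρ ^ k ≤ a (N + k) := by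
      intro k
      induction k with
      | zero =>
        right
        rw [hm₀def, pow_zero, mul_one, Nat.add_zero]
        exact min_le_left (a N) ℓ
      | succ n ih =>
        rcases ih with h | h
        · left
          exact stay (N + n) (Nat.le_add_right _ _) h
        · rcases le_or_gt ℓ (a (N + n)) with h' | h'
          · left
            exact stay (N + n) (Nat.le_add_right _ _) h'
          · right
            have hs := hstep (N + n) (Nat.le_add_right _ _)
            rw [min_eq_left h'.le] at hs
            have h2 : m₀ * ρ ^ (n + 1) ≤ ρ * a (N + n) := by
              have h3 := mul_le_mul_of_nonneg_left h hρ0.le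
              calc m₀ * ρ ^ (n + 1) = ρ * (m₀ * ρ ^ n) := by ring
                _ ≤ ρ * a (N + n) := h3
            exact le_trans h2 hs
    -- choose k with m₀ * ρ^k ≥ ℓ
    obtain ⟨k, hk⟩ := pow_unbounded_of_one_lt (ℓ / m₀) hρ1
    have hkℓ : ℓ ≤ m₀ * ρ ^ k := by
      rw [div_lt_iff₀ haN] at hk
      nlinarith
    have hfin : ∀ t, N + k ≤ t → ℓ ≤ a t := by
      intro t ht
      induction t, ht using Nat.le_induction with
      | base =>
        rcases growth k with h | h
        · exact h
        · exact le_trans hkℓ h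
      | succ n hn ih =>
        exact stay n (le_trans (Nat.le_add_right _ _) hn) ih
    exact Filter.eventually_atTop.2 ⟨N + k, hfin⟩
  -- conclude
  have hcob : IsCoboundedUnder (· ≥ ·) atTop a :=
    (isBoundedUnder_of ⟨1, fun t => (ha t).2⟩).isCoboundedUnder_ge
  refine le_of_forall_lt fun b hbL => ?_
  obtain ⟨ℓ, hℓdef⟩ : ∃ x : ℝ, x = max ((b + L) / 2) (L / 2) := ⟨_, rfl⟩
  have hℓ0 : 0 < ℓ := by
    rw [hℓdef]; exact lt_of_lt_of_le (by linarith) (le_max_right _ _)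
  have hℓL : ℓ < L := by rw [hℓdef]; exact max_lt (by linarith) (by linarith)
  have hbℓ : b < ℓ := by
    rw [hℓdef]; exact lt_of_lt_of_le (by linarith) (le_max_left _ _)
  have hlim : ℓ ≤ Filter.liminf a atTop := le_liminf_of_le hcob (key ℓ hℓ0 hℓL)
  linarith
end

section
/- Fix ε > 0 and work in the large-K pluralistic update regime. Assume S_{1,ε} ∩ S_{2,ε} = ∅, p_0(S_{1,ε}) > 0, p_0(S_{2,ε}) > 0, m_t → 0, the separation conditions with gaps Δ_1, Δ_2 > 2ε (so κ_1 := exp(−(Δ_1 − 2ε)), κ_2 := exp(−(Δ_2 − 2ε)) ∈ (0,1)), and q ∈ (κ_1, 1 − κ_2). Define L := (q − κ_1)/(1 − κ_1) and U := q/(1 − κ_2). Then liminf_{t→∞} a_t ≥ L and limsup_{t→∞} a_t ≤ U; in particular, there exist η > 0 and t_0 such that η ≤ a_t ≤ 1 − η for all t ≥ t_0. -/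
open MeasureTheory Filter Set

lemma seq_eventually_ge (a m : ℕ → ℝ) (κ q E : ℝ)
    (hκ0 : 0 < κ) (hκq : κ < q) (hq1 : q < 1) (hE : 0 < E)
    (ha0 : ∀ t, 0 < a t) (ha1 : ∀ t, a t ≤ 1) (hm0 : ∀ t, 0 ≤ m t)
    (hrec : ∀ t, q * a t / ((1 - κ) * a t + κ + E * m t) ≤ a (t + 1))
    (hm : Tendsto m atTop (nhds 0)) (δ : ℝ) (hδ : 0 < δ) :
    ∀ᶠ t in atTop, (q - κ) / (1 - κ) - δ ≤ a t := by
  have hκ1 : κ < 1 := hκq.trans hq1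
  have h1κ : 0 < 1 - κ := by linarith
  set Lv : ℝ := (q - κ) / (1 - κ) with hLv
  by_cases htriv : Lv - δ ≤ 0
  · exact Eventually.of_forall fun t => htriv.trans (ha0 t).le
  push_neg at htriv
  set θ : ℝ := Lv - δ with hθdef
  have hθ0 : 0 < θ := htriv
  have hLq : (1 - κ) * Lv + κ = q := by rw [hLv]; field_simp; ring
  set β : ℝ := (1 - κ) * δ / 2 with hβ
  have hβ0 : 0 < β := by positivity
  set D : ℝ := q - β with hD
  have hDθ : (1 - κ) * θ + κ + β = D := by
    have expand : (1 - κ) * θ + κ + β = ((1 - κ) * Lv + κ) - 2 * β + β := by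
      rw [hθdef, hβ]; ring
    rw [expand, hLq, hD]; ring
  have hD0 : 0 < D := by nlinarith
  have hDq : D < q := by rw [hD]; linarith
  have hEm : ∀ᶠ t in atTop, E * m t ≤ β := by
    have h2 : Tendsto (fun t => E * m t) atTop (nhds (E * 0)) := hm.const_mul E
    rw [mul_zero] at h2
    exact h2.eventually_le_const hβ0
  obtain ⟨T, hT⟩ := eventually_atTop.mp hEm
  set c : ℝ := q / D with hc
  have hc1 : 1 < c := (one_lt_div hD0).2 hDq
  have hdenpos : ∀ t, 0 < (1 - κ) * a t + κ + E * m t := by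
    intro t
    have h1 := hm0 t; have h2 := (ha0 t).le
    positivity
  -- step (i): if a t ≤ θ and t ≥ T then c * a t ≤ a (t+1)
  have step1 : ∀ t, T ≤ t → a t ≤ θ → c * a t ≤ a (t + 1) := by
    intro t ht hle
    refine le_trans ?_ (hrec t)
    rw [hc, div_mul_eq_mul_div, mul_comm q (a t), mul_comm (a t) q]
    have hden : (1 - κ) * a t + κ + E * m t ≤ D := by
      have := hT t ht; nlinarith
    exact div_le_div_of_nonneg_left (mul_nonneg (by linarith : (0:ℝ) ≤ q) (ha0 t).le) (hdenpos t) hden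
  -- step (ii): if θ ≤ a t and t ≥ T then θ ≤ a (t+1)
  have step2 : ∀ t, T ≤ t → θ ≤ a t → θ ≤ a (t + 1) := by
    intro t ht hge
    refine le_trans ?_ (hrec t)
    have hdθ : 0 < (1 - κ) * θ + κ + E * m t := by
      have := hm0 t; positivity
    have mono : q * θ / ((1 - κ) * θ + κ + E * m t) ≤
        q * a t / ((1 - κ) * a t + κ + E * m t) := by
      rw [div_le_div_iff₀ hdθ (hdenpos t)]
      have h1 := hm0 t
      nlinarith [mul_nonneg (mul_nonneg (by linarith : (0:ℝ) ≤ q)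
        (add_nonneg hκ0.le (mul_nonneg hE.le h1))) (by linarith : (0:ℝ) ≤ a t - θ)]
    refine le_trans ?_ mono
    have hden2 : (1 - κ) * θ + κ + E * m t ≤ D := by
      have := hT t ht; linarith [hDθ]
    rw [le_div_iff₀ hdθ]
    nlinarith [mul_le_mul_of_nonneg_left hden2 hθ0.le, mul_lt_mul_of_pos_left hDq hθ0]
  -- there exists t1 ≥ T with θ ≤ a t1
  have hex : ∃ t1, T ≤ t1 ∧ θ ≤ a t1 := by
    by_contra hcon
    push_neg at hcon
    have grow : ∀ n, c ^ n * a T ≤ a (T + n) := by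
      intro n
      induction n with
      | zero => simp
      | succ n ih =>
        have hlt : a (T + n) ≤ θ := (hcon (T + n) (Nat.le_add_right T n)).le
        have := step1 (T + n) (Nat.le_add_right T n) hlt
        calc c ^ (n + 1) * a T = c * (c ^ n * a T) := by ring
          _ ≤ c * a (T + n) := by nlinarith [pow_pos (lt_trans one_pos hc1) n, (ha0 T).le]
          _ ≤ a (T + n + 1) := this
    obtain ⟨n, hn⟩ := ((tendsto_pow_atTop_atTop_of_one_lt hc1).eventually_ge_atTop
      (2 / a T)).exists
    have h1 : c ^ n * a T ≥ 2 := by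
      have := (ha0 T)
      calc c ^ n * a T ≥ (2 / a T) * a T := by nlinarith
        _ = 2 := by field_simp
    have := grow n
    have := ha1 (T + n)
    linarith
  obtain ⟨t1, ht1T, ht1⟩ := hex
  -- for all t ≥ t1, θ ≤ a t
  have final : ∀ t, t1 ≤ t → θ ≤ a t := by
    intro t ht
    induction t with
    | zero => exact (Nat.le_zero.mp ht) ▸ ht1
    | succ t ih =>
      rcases Nat.lt_or_ge t1 (t + 1) with h | h
      · have htt : t1 ≤ t := Nat.lt_succ_iff.mp h
        exact step2 t (le_trans ht1T htt) (ih htt)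
      · exact le_antisymm ht h ▸ ht1
  filter_upwards [eventually_ge_atTop t1] with t ht using final t ht

lemma basin_bound {d : ℕ} (r1 r2 : EuclideanSpace ℝ (Fin d) → ℝ)
    (hm1 : Measurable r1) (hm2 : Measurable r2)
    (C : ℝ) (hb1 : ∀ x, |r1 x| ≤ C) (hb2 : ∀ x, |r2 x| ≤ C)
    (q : ℝ) (hq0 : 0 < q) (hq1 : q < 1)
    (p : ℕ → Measure (EuclideanSpace ℝ (Fin d)))
    (hprob : ∀ t, IsProbabilityMeasure (p t))
    (W : ℕ → EuclideanSpace ℝ (Fin d) → ℝ)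
    (hW : ∀ t x, W t x =
      q * Real.exp (r1 x) / (∫ y, Real.exp (r1 y) ∂(p t)) +
      (1 - q) * Real.exp (r2 x) / (∫ y, Real.exp (r2 y) ∂(p t)))
    (hupdate : ∀ t, p (t + 1) = (p t).withDensity (fun x => ENNReal.ofReal (W t x)))
    (ε : ℝ) (hε : 0 < ε) (r1star : ℝ)
    (hub : ∀ x, r1 x ≤ r1star)
    (S1 S2 : Set (EuclideanSpace ℝ (Fin d)))
    (hS1m : MeasurableSet S1) (hS2m : MeasurableSet S2)
    (hS1lb : ∀ x ∈ S1, r1star - ε ≤ r1 x)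
    (hdisj : Disjoint S1 S2)
    (hinit1 : 0 < ((p 0) S1).toReal)
    (hm : Tendsto (fun t => ((p t) (S1 ∪ S2)ᶜ).toReal) atTop (nhds 0))
    (Δ1 : ℝ) (hΔ1 : 2 * ε < Δ1)
    (hsep1 : ∀ x ∈ S2, r1 x ≤ r1star - Δ1 + ε)
    (κ1 : ℝ) (hκ1 : κ1 = Real.exp (-(Δ1 - 2 * ε)))
    (hκq : κ1 < q) :
    ∀ δ > 0, ∀ᶠ t in atTop, (q - κ1) / (1 - κ1) - δ ≤ ((p t) S1).toReal := by
  intro δ hδ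
  have hκ0 : 0 < κ1 := by rw [hκ1]; positivity
  set a : ℕ → ℝ := fun t => ((p t) S1).toReal with ha
  set mm : ℕ → ℝ := fun t => ((p t) (S1 ∪ S2)ᶜ).toReal with hmm
  set X : ℝ := Real.exp (r1star - ε) with hX
  have hX0 : 0 < X := Real.exp_pos _
  -- basic measurability / integrability
  have hexp1 : Measurable fun x => Real.exp (r1 x) := Real.measurable_exp.comp hm1
  have hexp2 : Measurable fun x => Real.exp (r2 x) := Real.measurable_exp.comp hm2
  have hint1 : ∀ t, Integrable (fun x => Real.exp (r1 x)) (p t) := fun t => by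
    haveI := hprob t
    exact (integrable_const (Real.exp C)).mono' hexp1.aestronglyMeasurable
      (Eventually.of_forall fun x => by
        rw [Real.norm_eq_abs, abs_of_pos (Real.exp_pos _)]
        exact Real.exp_le_exp.2 ((abs_le.1 (hb1 x)).2))
  have hint2 : ∀ t, Integrable (fun x => Real.exp (r2 x)) (p t) := fun t => by
    haveI := hprob t
    exact (integrable_const (Real.exp C)).mono' hexp2.aestronglyMeasurable
      (Eventually.of_forall fun x => by
        rw [Real.norm_eq_abs, abs_of_pos (Real.exp_pos _)]
        exact Real.exp_le_exp.2 ((abs_le.1 (hb2 x)).2))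
  have hZ1pos : ∀ t, 0 < ∫ y, Real.exp (r1 y) ∂(p t) := fun t => by
    haveI := hprob t
    calc (0:ℝ) < Real.exp (-C) := Real.exp_pos _
      _ = ∫ _, Real.exp (-C) ∂(p t) := by simp
      _ ≤ ∫ y, Real.exp (r1 y) ∂(p t) :=
        integral_mono (integrable_const _) (hint1 t)
          (fun x => Real.exp_le_exp.2 ((abs_le.1 (hb1 x)).1))
  have hZ2pos : ∀ t, 0 < ∫ y, Real.exp (r2 y) ∂(p t) := fun t => by
    haveI := hprob t
    calc (0:ℝ) < Real.exp (-C) := Real.exp_pos _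
      _ = ∫ _, Real.exp (-C) ∂(p t) := by simp
      _ ≤ ∫ y, Real.exp (r2 y) ∂(p t) :=
        integral_mono (integrable_const _) (hint2 t)
          (fun x => Real.exp_le_exp.2 ((abs_le.1 (hb2 x)).1))
  have hWnn : ∀ t x, 0 ≤ W t x := fun t x => by
    rw [hW t x]
    exact add_nonneg
      (div_nonneg (mul_nonneg hq0.le (Real.exp_pos _).le) (hZ1pos t).le)
      (div_nonneg (mul_nonneg (by linarith) (Real.exp_pos _).le) (hZ2pos t).le)
  have hWint : ∀ t, Integrable (W t) (p t) := fun t => by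
    have : W t = fun x =>
        q * Real.exp (r1 x) / (∫ y, Real.exp (r1 y) ∂(p t)) +
        (1 - q) * Real.exp (r2 x) / (∫ y, Real.exp (r2 y) ∂(p t)) := funext (hW t)
    rw [this]
    exact (((hint1 t).const_mul q).div_const _).add (((hint2 t).const_mul (1-q)).div_const _)
  -- update formula
  have haupdate : ∀ t, a (t+1) = ∫ x in S1, W t x ∂(p t) := by
    intro t
    have h1 : (p (t+1)) S1 = ∫⁻ x in S1, ENNReal.ofReal (W t x) ∂(p t) := by
      rw [hupdate t, withDensity_apply _ hS1m]
    have h2 : ENNReal.ofReal (∫ x in S1, W t x ∂(p t)) =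
        ∫⁻ x in S1, ENNReal.ofReal (W t x) ∂(p t) :=
      ofReal_integral_eq_lintegral_ofReal ((hWint t).restrict)
        (Eventually.of_forall fun x => hWnn t x)
    show ((p (t+1)) S1).toReal = _
    rw [h1, ← h2, ENNReal.toReal_ofReal (setIntegral_nonneg hS1m fun x _ => hWnn t x)]
  -- lower bound on a (t+1)
  have hL1 : ∀ t, q * (∫ x in S1, Real.exp (r1 x) ∂(p t)) / (∫ y, Real.exp (r1 y) ∂(p t))
      ≤ a (t+1) := by
    intro t
    rw [haupdate t]
    have hmono : ∫ x in S1, (q / (∫ y, Real.exp (r1 y) ∂(p t))) * Real.exp (r1 x) ∂(p t)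
        ≤ ∫ x in S1, W t x ∂(p t) := by
      refine setIntegral_mono_on (((hint1 t).const_mul _).integrableOn)
        ((hWint t).integrableOn) hS1m (fun x _ => ?_)
      rw [hW t x]
      have h2 : 0 ≤ (1 - q) * Real.exp (r2 x) / (∫ y, Real.exp (r2 y) ∂(p t)) :=
        div_nonneg (mul_nonneg (by linarith) (Real.exp_pos _).le) (hZ2pos t).le
      have : q / (∫ y, Real.exp (r1 y) ∂(p t)) * Real.exp (r1 x)
          = q * Real.exp (r1 x) / (∫ y, Real.exp (r1 y) ∂(p t)) := by ring
      linarith [this.le]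
    rw [integral_const_mul] at hmono
    calc q * (∫ x in S1, Real.exp (r1 x) ∂(p t)) / (∫ y, Real.exp (r1 y) ∂(p t))
        = (q / (∫ y, Real.exp (r1 y) ∂(p t))) * ∫ x in S1, Real.exp (r1 x) ∂(p t) := by ring
      _ ≤ _ := hmono
  -- numerator lower bound
  have hN : ∀ t, X * a t ≤ ∫ x in S1, Real.exp (r1 x) ∂(p t) := by
    intro t
    exact setIntegral_ge_of_const_le_real hS1m (measure_ne_top _ _)
      (fun x hx => Real.exp_le_exp.2 (hS1lb x hx)) (hint1 t).integrableOn
  -- positivity of a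
  have apos : ∀ t, 0 < a t := by
    intro t
    induction t with
    | zero => exact hinit1
    | succ t ih =>
      refine lt_of_lt_of_le ?_ (hL1 t)
      have hNpos : 0 < ∫ x in S1, Real.exp (r1 x) ∂(p t) :=
        lt_of_lt_of_le (mul_pos hX0 ih) (hN t)
      exact div_pos (mul_pos hq0 hNpos) (hZ1pos t)
  -- set decomposition facts
  have hdisj2 : Disjoint S2 (S1 ∪ S2)ᶜ := disjoint_compl_right.mono_left subset_union_right
  have hCcm : MeasurableSet (S1 ∪ S2)ᶜ := (hS1m.union hS2m).compl
  have hcompl : S1ᶜ = S2 ∪ (S1 ∪ S2)ᶜ := by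
    have hd : ∀ x, x ∈ S1 → x ∉ S2 := fun x h => disjoint_left.mp hdisj h
    ext x
    have := hd x
    simp only [mem_compl_iff, mem_union]
    tauto
  -- mass balance
  have hbm : ∀ t, a t + (((p t) S2).toReal + mm t) = 1 := by
    intro t
    haveI := hprob t
    have h1 : (p t) S1 + ((p t) S2 + (p t) (S1 ∪ S2)ᶜ) = 1 := by
      rw [← measure_union hdisj2 hCcm, ← hcompl, measure_add_measure_compl hS1m, measure_univ]
    have h2 := congrArg ENNReal.toReal h1
    rwa [ENNReal.toReal_add (measure_ne_top _ _)
        (ENNReal.add_ne_top.2 ⟨measure_ne_top _ _, measure_ne_top _ _⟩),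
      ENNReal.toReal_add (measure_ne_top _ _) (measure_ne_top _ _), ENNReal.toReal_one] at h2
  have hmm0 : ∀ t, 0 ≤ mm t := fun t => ENNReal.toReal_nonneg
  have hb0 : ∀ t, 0 ≤ ((p t) S2).toReal := fun t => ENNReal.toReal_nonneg
  have ha1 : ∀ t, a t ≤ 1 := fun t => by
    have := hbm t; have := hmm0 t; have := hb0 t; linarith
  -- upper bound on Z1
  have hZup : ∀ t, (∫ y, Real.exp (r1 y) ∂(p t)) ≤
      (∫ x in S1, Real.exp (r1 x) ∂(p t)) + κ1 * X * (1 - a t - mm t)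
        + Real.exp ε * X * mm t := by
    intro t
    haveI := hprob t
    have hsplit : (∫ y, Real.exp (r1 y) ∂(p t)) =
        (∫ x in S1, Real.exp (r1 x) ∂(p t)) + ∫ x in S1ᶜ, Real.exp (r1 x) ∂(p t) :=
      (integral_add_compl hS1m (hint1 t)).symm
    have hsplit2 : (∫ x in S1ᶜ, Real.exp (r1 x) ∂(p t)) =
        (∫ x in S2, Real.exp (r1 x) ∂(p t)) + ∫ x in (S1 ∪ S2)ᶜ, Real.exp (r1 x) ∂(p t) := by
      rw [hcompl, setIntegral_union hdisj2 hCcm (hint1 t).integrableOn (hint1 t).integrableOn]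
    have hS2bd : (∫ x in S2, Real.exp (r1 x) ∂(p t)) ≤
        Real.exp (r1star - Δ1 + ε) * ((p t) S2).toReal := by
      calc (∫ x in S2, Real.exp (r1 x) ∂(p t))
          ≤ ∫ _ in S2, Real.exp (r1star - Δ1 + ε) ∂(p t) :=
            setIntegral_mono_on (hint1 t).integrableOn (integrable_const _).integrableOn
              hS2m (fun x hx => Real.exp_le_exp.2 (hsep1 x hx))
        _ = Real.exp (r1star - Δ1 + ε) * ((p t) S2).toReal := by
            rw [setIntegral_const, smul_eq_mul, mul_comm, measureReal_def]
    have hCcbd : (∫ x in (S1 ∪ S2)ᶜ, Real.exp (r1 x) ∂(p t)) ≤ Real.exp r1star * mm t := by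
      calc (∫ x in (S1 ∪ S2)ᶜ, Real.exp (r1 x) ∂(p t))
          ≤ ∫ _ in (S1 ∪ S2)ᶜ, Real.exp r1star ∂(p t) :=
            setIntegral_mono_on (hint1 t).integrableOn (integrable_const _).integrableOn
              hCcm (fun x _ => Real.exp_le_exp.2 (hub x))
        _ = Real.exp r1star * mm t := by rw [setIntegral_const, smul_eq_mul, mul_comm, measureReal_def]
    have hc2 : Real.exp (r1star - Δ1 + ε) = κ1 * X := by
      rw [hκ1, hX, ← Real.exp_add]; ring_nf
    have hc3 : Real.exp r1star = Real.exp ε * X := by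
      rw [hX, ← Real.exp_add]; ring_nf
    have hbeq : ((p t) S2).toReal = 1 - a t - mm t := by have := hbm t; linarith
    rw [hsplit, hsplit2]
    rw [hc2] at hS2bd
    rw [hc3] at hCcbd
    rw [hbeq] at hS2bd
    linarith
  -- the recursion inequality
  have hκ11 : κ1 < 1 := hκq.trans hq1
  have hrec : ∀ t, q * a t / ((1 - κ1) * a t + κ1 + Real.exp ε * mm t) ≤ a (t + 1) := by
    intro t
    have hden : 0 < (1 - κ1) * a t + κ1 + Real.exp ε * mm t := by
      have h1 := mul_nonneg (by linarith : (0:ℝ) ≤ 1 - κ1) (apos t).le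
      have h2 := mul_nonneg (Real.exp_pos ε).le (hmm0 t)
      linarith
    refine le_trans ?_ (hL1 t)
    rw [div_le_div_iff₀ hden (hZ1pos t)]
    set Z := ∫ y, Real.exp (r1 y) ∂(p t) with hZdef
    set N := ∫ x in S1, Real.exp (r1 x) ∂(p t) with hNdef
    have f1 : a t * Z ≤ a t * (N + κ1 * X * (1 - a t - mm t) + Real.exp ε * X * mm t) :=
      mul_le_mul_of_nonneg_left (hZup t) (apos t).le
    have f2 : κ1 * ((X * a t) * (1 - a t)) ≤ κ1 * (N * (1 - a t)) :=
      mul_le_mul_of_nonneg_left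
        (mul_le_mul_of_nonneg_right (hN t) (by linarith [ha1 t])) hκ0.le
    have f3 : Real.exp ε * ((X * a t) * mm t) ≤ Real.exp ε * (N * mm t) :=
      mul_le_mul_of_nonneg_left
        (mul_le_mul_of_nonneg_right (hN t) (hmm0 t)) (Real.exp_pos ε).le
    have f4 : 0 ≤ κ1 * ((X * a t) * mm t) :=
      mul_nonneg hκ0.le (mul_nonneg (mul_nonneg hX0.le (apos t).le) (hmm0 t))
    have inner : a t * Z ≤ N * ((1 - κ1) * a t + κ1 + Real.exp ε * mm t) := by nlinarith
    nlinarith [mul_le_mul_of_nonneg_left inner hq0.le]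
  -- apply the abstract sequence lemma
  exact seq_eventually_ge a mm κ1 q (Real.exp ε) hκ0 hκq hq1 (Real.exp_pos ε)
    apos ha1 hmm0 hrec hm δ hδ

/-- **uniform non-collapse under bounded leakage.**  In the large-K
pluralistic update regime with disjoint ε-basins, positive initial basin masses,
outside mass `m_t → 0`, separation gaps `Δ₁, Δ₂ > 2ε` (leakage factors
`κᵢ := exp(−(Δᵢ − 2ε))`), and `q ∈ (κ₁, 1 − κ₂)`: with `L := (q − κ₁)/(1 − κ₁)` and
`U := q/(1 − κ₂)`, one has `liminf a_t ≥ L` and `limsup a_t ≤ U`; in particular there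
exist `η > 0` and `t₀` with `η ≤ a_t ≤ 1 − η` for all `t ≥ t₀`. -/
theorem uniform_noncollapse {d : ℕ}
    (r1 r2 : EuclideanSpace ℝ (Fin d) → ℝ)
    (hm1 : Measurable r1) (hm2 : Measurable r2)
    (C : ℝ) (hb1 : ∀ x, |r1 x| ≤ C) (hb2 : ∀ x, |r2 x| ≤ C)
    (q : ℝ) (hq : q ∈ Set.Ioo (0 : ℝ) 1)
    (p : ℕ → Measure (EuclideanSpace ℝ (Fin d)))
    (hprob : ∀ t, IsProbabilityMeasure (p t))
    (W : ℕ → EuclideanSpace ℝ (Fin d) → ℝ)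
    (hW : ∀ t x, W t x =
      q * Real.exp (r1 x) / (∫ y, Real.exp (r1 y) ∂(p t)) +
      (1 - q) * Real.exp (r2 x) / (∫ y, Real.exp (r2 y) ∂(p t)))
    (hupdate : ∀ t, p (t + 1) = (p t).withDensity (fun x => ENNReal.ofReal (W t x)))
    (ε : ℝ) (hε : 0 < ε)
    (r1star r2star : ℝ)
    (hr1star : r1star = sSup (Set.range r1)) (hr2star : r2star = sSup (Set.range r2))
    (S1 S2 : Set (EuclideanSpace ℝ (Fin d)))
    (hS1 : S1 = {x | r1star - ε ≤ r1 x}) (hS2 : S2 = {x | r2star - ε ≤ r2 x})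
    (hdisj : Disjoint S1 S2)
    (hinit1 : 0 < ((p 0) S1).toReal) (hinit2 : 0 < ((p 0) S2).toReal)
    (hm : Tendsto (fun t => ((p t) (S1 ∪ S2)ᶜ).toReal) atTop (nhds 0))
    (Δ1 Δ2 : ℝ) (hΔ1 : 2 * ε < Δ1) (hΔ2 : 2 * ε < Δ2)
    (hsep1 : ∀ x ∈ S2, r1 x ≤ r1star - Δ1 + ε)
    (hsep2 : ∀ x ∈ S1, r2 x ≤ r2star - Δ2 + ε)
    (κ1 κ2 : ℝ) (hκ1 : κ1 = Real.exp (-(Δ1 - 2 * ε))) (hκ2 : κ2 = Real.exp (-(Δ2 - 2 * ε)))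
    (hqrange : q ∈ Set.Ioo κ1 (1 - κ2))
    (L U : ℝ) (hL : L = (q - κ1) / (1 - κ1)) (hU : U = q / (1 - κ2)) :
    L ≤ Filter.liminf (fun t => ((p t) S1).toReal) atTop ∧
    Filter.limsup (fun t => ((p t) S1).toReal) atTop ≤ U ∧
    ∃ η > (0 : ℝ), ∃ t0 : ℕ, ∀ t ≥ t0,
      η ≤ ((p t) S1).toReal ∧ ((p t) S1).toReal ≤ 1 - η := by
  
  obtain ⟨hq0, hq1⟩ := hq
  obtain ⟨hκ1q, hq1κ2⟩ := hqrange
  have hκ10 : 0 < κ1 := by rw [hκ1]; positivity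
  have hκ20 : 0 < κ2 := by rw [hκ2]; positivity
  have hκ21 : κ2 < 1 := by linarith
  have hκ11 : κ1 < 1 := by linarith
  -- suprema bounds
  have hub1 : ∀ x, r1 x ≤ r1star := by
    intro x
    rw [hr1star]
    exact le_csSup ⟨C, by rintro y ⟨z, rfl⟩; exact (abs_le.1 (hb1 z)).2⟩ (Set.mem_range_self x)
  have hub2 : ∀ x, r2 x ≤ r2star := by
    intro x
    rw [hr2star]
    exact le_csSup ⟨C, by rintro y ⟨z, rfl⟩; exact (abs_le.1 (hb2 z)).2⟩ (Set.mem_range_self x)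
  have hS1m : MeasurableSet S1 := hS1 ▸ measurableSet_le measurable_const hm1
  have hS2m : MeasurableSet S2 := hS2 ▸ measurableSet_le measurable_const hm2
  have hS1lb : ∀ x ∈ S1, r1star - ε ≤ r1 x := fun x hx => by rw [hS1] at hx; exact hx
  have hS2lb : ∀ x ∈ S2, r2star - ε ≤ r2 x := fun x hx => by rw [hS2] at hx; exact hx
  -- two applications of basin_bound
  have B1 : ∀ δ > 0, ∀ᶠ t in atTop, (q - κ1) / (1 - κ1) - δ ≤ ((p t) S1).toReal :=
    basin_bound r1 r2 hm1 hm2 C hb1 hb2 q hq0 hq1 p hprob W hW hupdate ε hε r1star hub1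
      S1 S2 hS1m hS2m hS1lb hdisj hinit1 hm Δ1 hΔ1 hsep1 κ1 hκ1 hκ1q
  have hW' : ∀ t x, W t x =
      (1 - q) * Real.exp (r2 x) / (∫ y, Real.exp (r2 y) ∂(p t)) +
      (1 - (1 - q)) * Real.exp (r1 x) / (∫ y, Real.exp (r1 y) ∂(p t)) := by
    intro t x
    rw [hW t x]
    ring
  have hm' : Tendsto (fun t => ((p t) (S2 ∪ S1)ᶜ).toReal) atTop (nhds 0) := by
    have hcomm : S2 ∪ S1 = S1 ∪ S2 := Set.union_comm _ _
    rw [hcomm]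
    exact hm
  have B2 : ∀ δ > 0, ∀ᶠ t in atTop,
      ((1 - q) - κ2) / (1 - κ2) - δ ≤ ((p t) S2).toReal :=
    basin_bound r2 r1 hm2 hm1 C hb2 hb1 (1 - q) (by linarith) (by linarith) p hprob W hW'
      hupdate ε hε r2star hub2 S2 S1 hS2m hS1m hS2lb hdisj.symm hinit2 hm' Δ2 hΔ2 hsep2
      κ2 hκ2 (by linarith)
  -- basic bounds on a
  have ha0 : ∀ t, 0 ≤ ((p t) S1).toReal := fun t => ENNReal.toReal_nonneg
  have ha1 : ∀ t, ((p t) S1).toReal ≤ 1 := fun t => by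
    haveI := hprob t
    simpa using ENNReal.toReal_mono (by simp) (prob_le_one (μ := p t) (s := S1))
  have hab : ∀ t, ((p t) S1).toReal + ((p t) S2).toReal ≤ 1 := by
    intro t
    haveI := hprob t
    have h1 : (p t) S1 + (p t) S2 = (p t) (S1 ∪ S2) := (measure_union hdisj hS2m).symm
    have h3 := congrArg ENNReal.toReal h1
    rw [ENNReal.toReal_add (measure_ne_top _ _) (measure_ne_top _ _)] at h3
    rw [h3]
    simpa using ENNReal.toReal_mono ENNReal.one_ne_top (prob_le_one (μ := p t) (s := S1 ∪ S2))
  set a : ℕ → ℝ := fun t => ((p t) S1).toReal with hadef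
  set L2 : ℝ := ((1 - q) - κ2) / (1 - κ2) with hL2def
  have hUL2 : 1 - L2 = U := by
    have hne : (1:ℝ) - κ2 ≠ 0 := by linarith
    rw [hU, hL2def]
    field_simp
    ring
  have hcb_ge : IsCoboundedUnder (· ≥ ·) atTop a :=
    isCoboundedUnder_ge_of_eventually_le atTop (Eventually.of_forall ha1)
  have hcb_le : IsCoboundedUnder (· ≤ ·) atTop a :=
    isCoboundedUnder_le_of_eventually_le atTop (Eventually.of_forall ha0)
  have hliminf : L ≤ Filter.liminf a atTop := by
    refine le_of_forall_pos_le_add fun δ hδ => ?_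
    have h := le_liminf_of_le hcb_ge (B1 δ hδ)
    rw [hL]
    linarith
  have hlimsup : Filter.limsup a atTop ≤ U := by
    refine le_of_forall_pos_le_add fun δ hδ => ?_
    have hev : ∀ᶠ t in atTop, a t ≤ U + δ := by
      filter_upwards [B2 δ hδ] with t ht
      have h1 := hab t
      have : L2 - δ ≤ ((p t) S2).toReal := ht
      have haa : a t = ((p t) S1).toReal := rfl
      linarith
    exact limsup_le_of_le hcb_le hev
  refine ⟨hliminf, hlimsup, ?_⟩
  have hL0 : 0 < L := by
    rw [hL]
    exact div_pos (by linarith) (by linarith)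
  have hU1 : U < 1 := by
    rw [hU, div_lt_one (by linarith)]
    linarith
  refine ⟨min (L / 2) ((1 - U) / 2), lt_min (by linarith) (by linarith), ?_⟩
  obtain ⟨t1, h1⟩ := eventually_atTop.mp (B1 (L / 2) (by linarith))
  obtain ⟨t2, h2⟩ := eventually_atTop.mp (B2 ((1 - U) / 2) (by linarith))
  refine ⟨max t1 t2, fun t ht => ⟨?_, ?_⟩⟩
  · have := h1 t (le_trans (le_max_left _ _) ht)
    have hmin := min_le_left (L / 2) ((1 - U) / 2)
    linarith
  · have hb := h2 t (le_trans (le_max_right _ _) ht)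
    have h3 := hab t
    have hmin := min_le_right (L / 2) ((1 - U) / 2)
    linarith
end

section
/- Fix ε > 0, assume S_{1,ε} ∩ S_{2,ε} = ∅, that O_ε := 𝒳 ∖ (S_{1,ε} ∪ S_{2,ε}) is open, and that m_t := p_t(O_ε) → 0. Let t_k → ∞ be a subsequence with p_{t_k} ⇒ p_∞ weakly, and assume S_{1,ε} is a p_∞-continuity set. Then p_∞ is supported on S_{1,ε} ∪ S_{2,ε} and decomposes as p_∞ = a_∞·p_{∞,1} + (1 − a_∞)·p_{∞,2}, where a_∞ := p_∞(S_{1,ε}) and p_{∞,i} := p_∞(· | S_{i,ε}) whenever the corresponding mass is nonzero. If moreover a_t → a_∞ ∈ (0,1) and the separation conditions with gaps Δ_1, Δ_2 > 2ε hold, then max{0, (q − κ_1)/(1 − κ_1)} ≤ a_∞ ≤ min{1, q/(1 − κ_2)} with κ_i := exp(−(Δ_i − 2ε)), and a_∞ → q as Δ_1, Δ_2 → ∞. -/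
open MeasureTheory Filter Set ProbabilityTheory


private lemma frac_le_frac {x x' s s' : ℝ} (hx : 0 < x) (hxx : x ≤ x')
    (hs' : 0 ≤ s') (hss : s' ≤ s) : x / (x + s) ≤ x' / (x' + s') := by
  rw [div_le_div_iff₀ (by linarith) (by linarith)]
  nlinarith [mul_le_mul hxx hss hs' (le_trans hx.le hxx)]

private lemma frac_le_frac' {x x' s : ℝ} (hx : 0 ≤ x) (hxx : x ≤ x') (hs : 0 < s) :
    x / (x + s) ≤ x' / (x' + s) := by
  rw [div_le_div_iff₀ (by linarith) (by linarith)]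
  nlinarith [mul_le_mul_of_nonneg_right hxx hs.le]

private lemma smul_cond_eq_restrict {Ω : Type*} [MeasurableSpace Ω]
    (μ : Measure Ω) [IsFiniteMeasure μ] (s : Set Ω) :
    μ s • μ[|s] = μ.restrict s := by
  by_cases h0 : μ s = 0
  · rw [h0, zero_smul, eq_comm, Measure.restrict_eq_zero]
    exact h0
  · rw [ProbabilityTheory.cond, smul_smul, ENNReal.mul_inv_cancel h0 (measure_ne_top μ s),
      one_smul]

set_option maxHeartbeats 1000000 in
/-- **two-basin subsequential limits.**  In the large-K pluralistic
update regime, fix `ε > 0` with disjoint ε-basins `S_{1,ε}, S_{2,ε}`, the outside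
region `O_ε := 𝒳 ∖ (S_{1,ε} ∪ S_{2,ε})` open, and outside mass `m_t → 0`.  Let
`t_k → ∞` be a subsequence with `p_{t_k} ⇒ p_∞` weakly and `S_{1,ε}` a
`p_∞`-continuity set.  Then `p_∞` is supported on `S_{1,ε} ∪ S_{2,ε}` and decomposes
as `p_∞ = a_∞ p_∞(·|S_{1,ε}) + (1 − a_∞) p_∞(·|S_{2,ε})` with `a_∞ := p_∞(S_{1,ε})`.
If moreover `a_t → a_∞ ∈ (0,1)` and the separation conditions hold with gaps
`Δ₁, Δ₂ > 2ε`, then `max{0,(q−κ₁)/(1−κ₁)} ≤ a_∞ ≤ min{1, q/(1−κ₂)}` with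
`κᵢ := exp(−(Δᵢ − 2ε))`, and the interval endpoints tend to `q` as `Δ₁, Δ₂ → ∞`. -/
theorem two_basin_subsequential_limit {d : ℕ}
    (r1 r2 : EuclideanSpace ℝ (Fin d) → ℝ)
    (hm1 : Measurable r1) (hm2 : Measurable r2)
    (C : ℝ) (hb1 : ∀ x, |r1 x| ≤ C) (hb2 : ∀ x, |r2 x| ≤ C)
    (q : ℝ) (hq : q ∈ Set.Ioo (0 : ℝ) 1)
    (p : ℕ → Measure (EuclideanSpace ℝ (Fin d)))
    (hprob : ∀ t, IsProbabilityMeasure (p t))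
    (W : ℕ → EuclideanSpace ℝ (Fin d) → ℝ)
    (hW : ∀ t x, W t x =
      q * Real.exp (r1 x) / (∫ y, Real.exp (r1 y) ∂(p t)) +
      (1 - q) * Real.exp (r2 x) / (∫ y, Real.exp (r2 y) ∂(p t)))
    (hupdate : ∀ t, p (t + 1) = (p t).withDensity (fun x => ENNReal.ofReal (W t x)))
    (ε : ℝ) (hε : 0 < ε)
    (r1star r2star : ℝ)
    (hr1star : r1star = sSup (Set.range r1)) (hr2star : r2star = sSup (Set.range r2))
    (S1 S2 : Set (EuclideanSpace ℝ (Fin d)))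
    (hS1 : S1 = {x | r1star - ε ≤ r1 x}) (hS2 : S2 = {x | r2star - ε ≤ r2 x})
    (hdisj : Disjoint S1 S2)
    (hopen : IsOpen ((S1 ∪ S2)ᶜ))
    (hm : Tendsto (fun t => ((p t) (S1 ∪ S2)ᶜ).toReal) atTop (nhds 0))
    (φ : ℕ → ℕ) (hφ : StrictMono φ)
    (pLim : Measure (EuclideanSpace ℝ (Fin d))) (hpLim : IsProbabilityMeasure pLim)
    (hconv : ∀ f : BoundedContinuousFunction (EuclideanSpace ℝ (Fin d)) ℝ,
      Tendsto (fun k => ∫ x, f x ∂(p (φ k))) atTop (nhds (∫ x, f x ∂pLim)))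
    (hcont : pLim (frontier S1) = 0)
    (aLim : ℝ) (haLim : aLim = (pLim S1).toReal) :
    -- `p_∞` is supported on the union of the two basins
    pLim ((S1 ∪ S2)ᶜ) = 0 ∧
    -- two-component mixture decomposition via basin conditionals
    pLim = ENNReal.ofReal aLim • pLim[|S1] + ENNReal.ofReal (1 - aLim) • pLim[|S2] ∧
    -- if moreover `a_t → a_∞ ∈ (0,1)` and the separation conditions hold, then the
    -- limiting basin weight lies in the leakage interval
    ((Tendsto (fun t => ((p t) S1).toReal) atTop (nhds aLim) ∧ aLim ∈ Set.Ioo (0 : ℝ) 1) →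
      ∀ Δ1 Δ2 : ℝ, 2 * ε < Δ1 → 2 * ε < Δ2 →
        (∀ x ∈ S2, r1 x ≤ r1star - Δ1 + ε) →
        (∀ x ∈ S1, r2 x ≤ r2star - Δ2 + ε) →
        max 0 ((q - Real.exp (-(Δ1 - 2 * ε))) / (1 - Real.exp (-(Δ1 - 2 * ε)))) ≤ aLim ∧
        aLim ≤ min 1 (q / (1 - Real.exp (-(Δ2 - 2 * ε))))) ∧
    -- the interval endpoints tend to `q` as the separation gaps grow
    Tendsto (fun Δ : ℝ =>
        max 0 ((q - Real.exp (-(Δ - 2 * ε))) / (1 - Real.exp (-(Δ - 2 * ε)))))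
      atTop (nhds q) ∧
    Tendsto (fun Δ : ℝ => min 1 (q / (1 - Real.exp (-(Δ - 2 * ε))))) atTop (nhds q) := by
  haveI := hpLim
  have mS1 : MeasurableSet S1 := by
    rw [hS1]; exact measurableSet_le measurable_const hm1
  have mS2 : MeasurableSet S2 := by
    rw [hS2]; exact measurableSet_le measurable_const hm2
  -- Part 1: support
  have hsupp : pLim ((S1 ∪ S2)ᶜ) = 0 := by
    let P : ℕ → ProbabilityMeasure (EuclideanSpace ℝ (Fin d)) := fun k => ⟨p (φ k), hprob _⟩
    let PL : ProbabilityMeasure (EuclideanSpace ℝ (Fin d)) := ⟨pLim, hpLim⟩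
    have hT : Tendsto P atTop (nhds PL) :=
      ProbabilityMeasure.tendsto_iff_forall_integral_tendsto.mpr (fun f => hconv f)
    have key := ProbabilityMeasure.le_liminf_measure_open_of_tendsto hT hopen
    have h0 : Tendsto (fun t => (p t) ((S1 ∪ S2)ᶜ)) atTop (nhds 0) := by
      have := (ENNReal.tendsto_toReal_iff (f := fun t => (p t) ((S1 ∪ S2)ᶜ))
        (fun t => measure_ne_top _ _) (x := 0) (by simp)).mp (by simpa using hm)
      exact this
    have h0' : Tendsto (fun k => (P k : Measure (EuclideanSpace ℝ (Fin d))) ((S1 ∪ S2)ᶜ))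
        atTop (nhds 0) := h0.comp hφ.tendsto_atTop
    rw [h0'.liminf_eq] at key
    exact le_antisymm key (zero_le)
  refine ⟨hsupp, ?_, ?_, ?_, ?_⟩
  -- Part 2: decomposition
  · have hUnion : pLim (S1 ∪ S2) = 1 := by
      have := measure_add_measure_compl (μ := pLim) (mS1.union mS2)
      rw [hsupp, add_zero, measure_univ] at this
      exact this
    have hsum : pLim S1 + pLim S2 = 1 := by
      rw [← measure_union hdisj mS2]; exact hUnion
    have h1 : ENNReal.ofReal aLim = pLim S1 := by
      rw [haLim, ENNReal.ofReal_toReal (measure_ne_top _ _)]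
    have h2 : ENNReal.ofReal (1 - aLim) = pLim S2 := by
      have htr : (pLim S1).toReal + (pLim S2).toReal = 1 := by
        rw [← ENNReal.toReal_add (measure_ne_top _ _) (measure_ne_top _ _), hsum,
          ENNReal.toReal_one]
      have : 1 - aLim = (pLim S2).toReal := by rw [haLim]; linarith
      rw [this, ENNReal.ofReal_toReal (measure_ne_top _ _)]
    rw [h1, h2, smul_cond_eq_restrict, smul_cond_eq_restrict,
      ← Measure.restrict_union hdisj mS2]
    conv_lhs => rw [← Measure.restrict_add_restrict_compl (μ := pLim) (mS1.union mS2)]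
    rw [Measure.restrict_eq_zero.mpr hsupp, add_zero]
  -- Part 3: leakage interval
  · rintro ⟨aconv, ha0, ha1⟩ Δ1 Δ2 hΔ1 hΔ2 hsep1 hsep2
    set κ1 := Real.exp (-(Δ1 - 2 * ε)) with hκ1def
    set κ2 := Real.exp (-(Δ2 - 2 * ε)) with hκ2def
    have hκ1pos : 0 < κ1 := Real.exp_pos _
    have hκ2pos : 0 < κ2 := Real.exp_pos _
    have hκ1lt : κ1 < 1 := by
      rw [hκ1def, ← Real.exp_zero]
      exact Real.exp_lt_exp.mpr (by linarith)
    have hκ2lt : κ2 < 1 := by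
      rw [hκ2def, ← Real.exp_zero]
      exact Real.exp_lt_exp.mpr (by linarith)
    set a : ℕ → ℝ := fun t => ((p t) S1).toReal with hadef
    set b : ℕ → ℝ := fun t => ((p t) S2).toReal with hbdef
    set mm : ℕ → ℝ := fun t => ((p t) (S1 ∪ S2)ᶜ).toReal with hmmdef
    have hann : ∀ t, 0 ≤ a t := fun t => ENNReal.toReal_nonneg
    have hbnn : ∀ t, 0 ≤ b t := fun t => ENNReal.toReal_nonneg
    have hmnn : ∀ t, 0 ≤ mm t := fun t => ENNReal.toReal_nonneg
    have hsumt : ∀ t, a t + b t + mm t = 1 := by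
      intro t
      haveI := hprob t
      have h12 : p t (S1 ∪ S2) = p t S1 + p t S2 := measure_union hdisj mS2
      have hc : p t (S1 ∪ S2) + p t (S1 ∪ S2)ᶜ = 1 := by
        rw [measure_add_measure_compl (mS1.union mS2), measure_univ]
      have h3 : p t S1 + p t S2 + p t (S1 ∪ S2)ᶜ = 1 := by rw [← h12]; exact hc
      have := congrArg ENNReal.toReal h3
      rw [ENNReal.toReal_add (ENNReal.add_ne_top.mpr ⟨measure_ne_top _ _, measure_ne_top _ _⟩)
        (measure_ne_top _ _), ENNReal.toReal_add (measure_ne_top _ _) (measure_ne_top _ _),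
        ENNReal.toReal_one] at this
      exact this
    -- integrability
    have hexp1 : ∀ t, Integrable (fun x => Real.exp (r1 x)) (p t) := by
      intro t
      haveI := hprob t
      refine (integrable_const (Real.exp C)).mono'
        (Real.measurable_exp.comp hm1).aestronglyMeasurable (ae_of_all _ fun x => ?_)
      rw [Real.norm_eq_abs, abs_of_pos (Real.exp_pos _)]
      exact Real.exp_le_exp.mpr (abs_le.mp (hb1 x)).2
    have hexp2 : ∀ t, Integrable (fun x => Real.exp (r2 x)) (p t) := by
      intro t
      haveI := hprob t
      refine (integrable_const (Real.exp C)).mono'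
        (Real.measurable_exp.comp hm2).aestronglyMeasurable (ae_of_all _ fun x => ?_)
      rw [Real.norm_eq_abs, abs_of_pos (Real.exp_pos _)]
      exact Real.exp_le_exp.mpr (abs_le.mp (hb2 x)).2
    set Z1 : ℕ → ℝ := fun t => ∫ y, Real.exp (r1 y) ∂(p t) with hZ1def
    set Z2 : ℕ → ℝ := fun t => ∫ y, Real.exp (r2 y) ∂(p t) with hZ2def
    have hZ1pos : ∀ t, 0 < Z1 t := by
      intro t
      haveI := hprob t
      have h := integral_mono (μ := p t) (integrable_const (Real.exp (-C))) (hexp1 t)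
        (fun x => Real.exp_le_exp.mpr (by linarith [(abs_le.mp (hb1 x)).1]))
      have h2 : ∫ (_ : EuclideanSpace ℝ (Fin d)), Real.exp (-C) ∂(p t) = Real.exp (-C) := by
        simp
      rw [h2] at h
      linarith [Real.exp_pos (-C)]
    have hZ2pos : ∀ t, 0 < Z2 t := by
      intro t
      haveI := hprob t
      have h := integral_mono (μ := p t) (integrable_const (Real.exp (-C))) (hexp2 t)
        (fun x => Real.exp_le_exp.mpr (by linarith [(abs_le.mp (hb2 x)).1]))
      have h2 : ∫ (_ : EuclideanSpace ℝ (Fin d)), Real.exp (-C) ∂(p t) = Real.exp (-C) := by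
        simp
      rw [h2] at h
      linarith [Real.exp_pos (-C)]
    have hWeq : ∀ t x, W t x =
        (q / Z1 t) * Real.exp (r1 x) + ((1 - q) / Z2 t) * Real.exp (r2 x) := by
      intro t x; rw [hW]; ring
    have hWnn : ∀ t x, 0 ≤ W t x := by
      intro t x
      rw [hWeq]
      have := hZ1pos t; have := hZ2pos t
      have h1 : 0 ≤ q / Z1 t := div_nonneg hq.1.le (hZ1pos t).le
      have h2 : 0 ≤ (1 - q) / Z2 t := div_nonneg (by linarith [hq.2]) (hZ2pos t).le
      positivity
    -- set integrals
    set A : ℕ → ℝ := fun t => ∫ x in S1, Real.exp (r1 x) ∂(p t) with hAdef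
    set B : ℕ → ℝ := fun t => ∫ x in S2, Real.exp (r1 x) ∂(p t) with hBdef
    set M : ℕ → ℝ := fun t => ∫ x in (S1 ∪ S2)ᶜ, Real.exp (r1 x) ∂(p t) with hMdef
    set D : ℕ → ℝ := fun t => ∫ x in S1, Real.exp (r2 x) ∂(p t) with hDdef
    set E : ℕ → ℝ := fun t => ∫ x in S2, Real.exp (r2 x) ∂(p t) with hEdef
    set F : ℕ → ℝ := fun t => ∫ x in (S1 ∪ S2)ᶜ, Real.exp (r2 x) ∂(p t) with hFdef
    have hZ1split : ∀ t, Z1 t = A t + B t + M t := by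
      intro t
      have h1 : A t + B t = ∫ x in S1 ∪ S2, Real.exp (r1 x) ∂(p t) :=
        (setIntegral_union hdisj mS2 (hexp1 t).integrableOn (hexp1 t).integrableOn).symm
      have h2 := integral_add_compl (mS1.union mS2) (hexp1 t)
      rw [hZ1def]; dsimp only
      rw [← h2, ← h1]
    have hZ2split : ∀ t, Z2 t = D t + E t + F t := by
      intro t
      have h1 : D t + E t = ∫ x in S1 ∪ S2, Real.exp (r2 x) ∂(p t) :=
        (setIntegral_union hdisj mS2 (hexp2 t).integrableOn (hexp2 t).integrableOn).symm
      have h2 := integral_add_compl (mS1.union mS2) (hexp2 t)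
      rw [hZ2def]; dsimp only
      rw [← h2, ← h1]
    have hbdd1 : ∀ x, r1 x ≤ r1star := by
      intro x
      rw [hr1star]
      exact le_csSup ⟨C, by rintro y ⟨z, rfl⟩; exact (abs_le.mp (hb1 z)).2⟩ ⟨x, rfl⟩
    -- integral bounds
    have hconst : ∀ (t : ℕ) (s : Set (EuclideanSpace ℝ (Fin d))) (c : ℝ),
        ∫ _ in s, c ∂(p t) = ((p t) s).toReal * c := by
      intro t s c
      haveI := hprob t
      rw [setIntegral_const, smul_eq_mul]
      rfl
    have hA : ∀ t, a t * Real.exp (r1star - ε) ≤ A t := by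
      intro t
      haveI := hprob t
      have := setIntegral_mono_on (integrableOn_const (C := Real.exp (r1star - ε)) (measure_ne_top _ _))
        (hexp1 t).integrableOn mS1
        (fun x hx => Real.exp_le_exp.mpr (by rw [hS1] at hx; exact hx))
      rwa [hconst] at this
    have hB : ∀ t, B t ≤ b t * Real.exp (r1star - Δ1 + ε) := by
      intro t
      haveI := hprob t
      have := setIntegral_mono_on (hexp1 t).integrableOn
        (integrableOn_const (measure_ne_top _ _)) mS2
        (fun x hx => Real.exp_le_exp.mpr (hsep1 x hx))
      rwa [hconst] at this
    have hM : ∀ t, M t ≤ mm t * Real.exp r1star := by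
      intro t
      haveI := hprob t
      have := setIntegral_mono_on (hexp1 t).integrableOn
        (integrableOn_const (measure_ne_top _ _)) (mS1.union mS2).compl
        (fun x _ => Real.exp_le_exp.mpr (hbdd1 x))
      rwa [hconst] at this
    have hD : ∀ t, D t ≤ a t * Real.exp (r2star - Δ2 + ε) := by
      intro t
      haveI := hprob t
      have := setIntegral_mono_on (hexp2 t).integrableOn
        (integrableOn_const (measure_ne_top _ _)) mS1
        (fun x hx => Real.exp_le_exp.mpr (hsep2 x hx))
      rwa [hconst] at this
    have hE : ∀ t, b t * Real.exp (r2star - ε) ≤ E t := by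
      intro t
      haveI := hprob t
      have := setIntegral_mono_on (integrableOn_const (C := Real.exp (r2star - ε)) (measure_ne_top _ _))
        (hexp2 t).integrableOn mS2
        (fun x hx => Real.exp_le_exp.mpr (by rw [hS2] at hx; exact hx))
      rwa [hconst] at this
    have hAnn : ∀ t, 0 ≤ A t := fun t =>
      setIntegral_nonneg mS1 (fun x _ => (Real.exp_pos _).le)
    have hBnn : ∀ t, 0 ≤ B t := fun t =>
      setIntegral_nonneg mS2 (fun x _ => (Real.exp_pos _).le)
    have hMnn : ∀ t, 0 ≤ M t := fun t =>
      setIntegral_nonneg (mS1.union mS2).compl (fun x _ => (Real.exp_pos _).le)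
    have hDnn : ∀ t, 0 ≤ D t := fun t =>
      setIntegral_nonneg mS1 (fun x _ => (Real.exp_pos _).le)
    have hFnn : ∀ t, 0 ≤ F t := fun t =>
      setIntegral_nonneg (mS1.union mS2).compl (fun x _ => (Real.exp_pos _).le)
    -- step formula
    have hstep : ∀ t, a (t + 1) = (q / Z1 t) * A t + ((1 - q) / Z2 t) * D t := by
      intro t
      haveI := hprob t
      have hWm : Measurable (W t) := by
        have : W t = fun x =>
            (q / Z1 t) * Real.exp (r1 x) + ((1 - q) / Z2 t) * Real.exp (r2 x) :=
          funext (hWeq t)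
        rw [this]
        exact ((Real.measurable_exp.comp hm1).const_mul _).add
          ((Real.measurable_exp.comp hm2).const_mul _)
      have h1 : (p (t + 1)) S1 = ∫⁻ x in S1, ENNReal.ofReal (W t x) ∂(p t) := by
        rw [hupdate t, withDensity_apply _ mS1]
      have h2 : ∫ x in S1, W t x ∂(p t) =
          (∫⁻ x in S1, ENNReal.ofReal (W t x) ∂(p t)).toReal :=
        integral_eq_lintegral_of_nonneg_ae (ae_of_all _ (fun x => hWnn t x))
          hWm.aestronglyMeasurable
      have h3 : a (t + 1) = ∫ x in S1, W t x ∂(p t) := by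
        rw [hadef]; dsimp only; rw [h1, h2]
      rw [h3]
      calc ∫ x in S1, W t x ∂(p t)
          = ∫ x in S1, ((q / Z1 t) * Real.exp (r1 x) + ((1 - q) / Z2 t) * Real.exp (r2 x))
            ∂(p t) := by
            refine setIntegral_congr_fun mS1 (fun x _ => hWeq t x)
        _ = (q / Z1 t) * A t + ((1 - q) / Z2 t) * D t := by
            rw [integral_add (((hexp1 t).integrableOn).const_mul _)
              (((hexp2 t).integrableOn).const_mul _), integral_const_mul, integral_const_mul]
    -- limits of a, b, mm
    have hbconv : Tendsto b atTop (nhds (1 - aLim)) := by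
      have hfun : b = fun t => 1 - a t - mm t := funext fun t => by linarith [hsumt t]
      rw [hfun]
      have := (tendsto_const_nhds (x := (1 : ℝ)) (f := atTop)).sub aconv |>.sub hm
      simpa using this
    have haev : ∀ᶠ t in atTop, 0 < a t := aconv.eventually (eventually_gt_nhds ha0)
    have hbev : ∀ᶠ t in atTop, 0 < b t :=
      hbconv.eventually (eventually_gt_nhds (by linarith))
    constructor
    -- lower bound
    · have hlow : ∀ᶠ t in atTop,
          q * (a t / (a t + (κ1 * b t + Real.exp ε * mm t))) ≤ a (t + 1) := by
        filter_upwards [haev] with t hat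
        have hc1 : 0 < Real.exp (r1star - ε) := Real.exp_pos _
        have e1 : Real.exp (r1star - Δ1 + ε) = κ1 * Real.exp (r1star - ε) := by
          rw [hκ1def, ← Real.exp_add]; congr 1; ring
        have e2 : Real.exp r1star = Real.exp ε * Real.exp (r1star - ε) := by
          rw [← Real.exp_add]; congr 1; ring
        have hBM : B t + M t ≤
            κ1 * b t * Real.exp (r1star - ε) + Real.exp ε * mm t * Real.exp (r1star - ε) := by
          have := add_le_add (hB t) (hM t)
          rw [e1, e2] at this
          linarith [this]
        have hd1 : 0 < a t + (κ1 * b t + Real.exp ε * mm t) := by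
          have := hbnn t; have := hmnn t
          have h1 : 0 ≤ κ1 * b t := by positivity
          have h2 : 0 ≤ Real.exp ε * mm t := by positivity
          linarith
        have hfrac : a t / (a t + (κ1 * b t + Real.exp ε * mm t)) ≤ A t / (A t + (B t + M t)) := by
          have hpos2 : 0 < a t * Real.exp (r1star - ε) +
              (κ1 * b t * Real.exp (r1star - ε) + Real.exp ε * mm t * Real.exp (r1star - ε)) := by
            have hx1 : 0 < a t * Real.exp (r1star - ε) := mul_pos hat hc1
            have hx2 : 0 ≤ κ1 * b t * Real.exp (r1star - ε) :=
              mul_nonneg (mul_nonneg hκ1pos.le (hbnn t)) hc1.le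
            have hx3 : 0 ≤ Real.exp ε * mm t * Real.exp (r1star - ε) :=
              mul_nonneg (mul_nonneg (Real.exp_pos ε).le (hmnn t)) hc1.le
            linarith
          have h1 := frac_le_frac (x := a t * Real.exp (r1star - ε)) (x' := A t)
            (s := κ1 * b t * Real.exp (r1star - ε) + Real.exp ε * mm t * Real.exp (r1star - ε))
            (s' := B t + M t) (mul_pos hat hc1) (hA t) (add_nonneg (hBnn t) (hMnn t)) hBM
          have heq : a t / (a t + (κ1 * b t + Real.exp ε * mm t)) =
              a t * Real.exp (r1star - ε) /
                (a t * Real.exp (r1star - ε) +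
                  (κ1 * b t * Real.exp (r1star - ε) + Real.exp ε * mm t * Real.exp (r1star - ε))) := by
            rw [div_eq_div_iff hd1.ne' hpos2.ne']
            ring
          rw [heq]
          exact h1
        have hZeq : Z1 t = A t + (B t + M t) := by rw [hZ1split t]; ring
        calc q * (a t / (a t + (κ1 * b t + Real.exp ε * mm t)))
            ≤ q * (A t / Z1 t) := by
              rw [hZeq]; exact mul_le_mul_of_nonneg_left hfrac hq.1.le
          _ = (q / Z1 t) * A t := by ring
          _ ≤ (q / Z1 t) * A t + ((1 - q) / Z2 t) * D t :=
              le_add_of_nonneg_right (mul_nonneg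
                (div_nonneg (by linarith [hq.2]) (hZ2pos t).le) (hDnn t))
          _ = a (t + 1) := (hstep t).symm
      have hdenpos : (0 : ℝ) < aLim + (κ1 * (1 - aLim) + Real.exp ε * 0) := by
        have : 0 < κ1 * (1 - aLim) := mul_pos hκ1pos (by linarith)
        linarith
      have hLlim : Tendsto (fun t => q * (a t / (a t + (κ1 * b t + Real.exp ε * mm t))))
          atTop (nhds (q * (aLim / (aLim + (κ1 * (1 - aLim) + Real.exp ε * 0))))) := by
        apply Tendsto.const_mul
        exact aconv.div
          (aconv.add ((tendsto_const_nhds.mul hbconv).add (tendsto_const_nhds.mul hm)))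
          hdenpos.ne'
      have hkey := le_of_tendsto_of_tendsto hLlim (aconv.comp (tendsto_add_atTop_nat 1)) hlow
      rw [mul_zero, add_zero] at hkey
      have hden : (0 : ℝ) < aLim + κ1 * (1 - aLim) := by nlinarith
      have h1 : q * aLim ≤ aLim * (aLim + κ1 * (1 - aLim)) := by
        rw [mul_div_assoc'] at hkey
        exact (div_le_iff₀ hden).mp hkey
      have h2 : q ≤ aLim + κ1 * (1 - aLim) := by
        by_contra hcon
        push_neg at hcon
        nlinarith
      refine max_le ha0.le ?_
      rw [div_le_iff₀ (by linarith : (0 : ℝ) < 1 - κ1)]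
      nlinarith
    -- upper bound
    · have hup : ∀ᶠ t in atTop,
          a (t + 1) ≤ q + (1 - q) * (κ2 * a t / (κ2 * a t + b t)) := by
        filter_upwards [hbev] with t hbt
        have hc2 : 0 < Real.exp (r2star - ε) := Real.exp_pos _
        haveI := hprob t
        have hterm1 : (q / Z1 t) * A t ≤ q := by
          have hAle : A t ≤ Z1 t := by
            rw [hZ1split t]; linarith [hBnn t, hMnn t]
          calc (q / Z1 t) * A t ≤ (q / Z1 t) * Z1 t :=
              mul_le_mul_of_nonneg_left hAle (div_nonneg hq.1.le (hZ1pos t).le)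
            _ = q := div_mul_cancel₀ q (hZ1pos t).ne'
        have e3 : Real.exp (r2star - Δ2 + ε) = κ2 * Real.exp (r2star - ε) := by
          rw [hκ2def, ← Real.exp_add]; congr 1; ring
        have hZ2ge : D t + b t * Real.exp (r2star - ε) ≤ Z2 t := by
          rw [hZ2split t]; linarith [hE t, hFnn t]
        have hdpos : 0 < D t + b t * Real.exp (r2star - ε) := by
          have := hDnn t
          have : 0 < b t * Real.exp (r2star - ε) := mul_pos hbt hc2
          linarith [hDnn t]
        have h2a : D t / Z2 t ≤ D t / (D t + b t * Real.exp (r2star - ε)) :=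
          div_le_div_of_nonneg_left (hDnn t) hdpos hZ2ge
        have hDle : D t ≤ κ2 * a t * Real.exp (r2star - ε) := by
          calc D t ≤ a t * Real.exp (r2star - Δ2 + ε) := hD t
            _ = κ2 * a t * Real.exp (r2star - ε) := by rw [e3]; ring
        have h2b : D t / (D t + b t * Real.exp (r2star - ε)) ≤
            κ2 * a t * Real.exp (r2star - ε) /
              (κ2 * a t * Real.exp (r2star - ε) + b t * Real.exp (r2star - ε)) :=
          frac_le_frac' (hDnn t) hDle (by positivity)
        have h2c : κ2 * a t * Real.exp (r2star - ε) /
            (κ2 * a t * Real.exp (r2star - ε) + b t * Real.exp (r2star - ε)) =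
            κ2 * a t / (κ2 * a t + b t) := by
          have hat := hann t
          have hx : 0 < κ2 * a t + b t := by
            have : 0 ≤ κ2 * a t := by positivity
            linarith
          rw [div_eq_div_iff (by positivity : (0:ℝ) < κ2 * a t * Real.exp (r2star - ε) + b t * Real.exp (r2star - ε)).ne' hx.ne']
          ring
        have hterm2 : ((1 - q) / Z2 t) * D t ≤ (1 - q) * (κ2 * a t / (κ2 * a t + b t)) := by
          have : D t / Z2 t ≤ κ2 * a t / (κ2 * a t + b t) := by
            rw [← h2c]; exact le_trans h2a h2b
          calc ((1 - q) / Z2 t) * D t = (1 - q) * (D t / Z2 t) := by ring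
            _ ≤ (1 - q) * (κ2 * a t / (κ2 * a t + b t)) :=
              mul_le_mul_of_nonneg_left this (by linarith [hq.2])
        calc a (t + 1) = (q / Z1 t) * A t + ((1 - q) / Z2 t) * D t := hstep t
          _ ≤ q + (1 - q) * (κ2 * a t / (κ2 * a t + b t)) := add_le_add hterm1 hterm2
      have hdenpos : (0 : ℝ) < κ2 * aLim + (1 - aLim) := by
        have : 0 < κ2 * aLim := mul_pos hκ2pos ha0
        linarith
      have hUlim : Tendsto (fun t => q + (1 - q) * (κ2 * a t / (κ2 * a t + b t)))
          atTop (nhds (q + (1 - q) * (κ2 * aLim / (κ2 * aLim + (1 - aLim))))) := by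
        apply Tendsto.const_add
        apply Tendsto.const_mul
        exact (tendsto_const_nhds.mul aconv).div
          ((tendsto_const_nhds.mul aconv).add hbconv) hdenpos.ne'
      have hkey := le_of_tendsto_of_tendsto (aconv.comp (tendsto_add_atTop_nat 1)) hUlim hup
      have h3 : (aLim - q) * (κ2 * aLim + (1 - aLim)) ≤ (1 - q) * (κ2 * aLim) := by
        have h4 : aLim - q ≤ (1 - q) * (κ2 * aLim) / (κ2 * aLim + (1 - aLim)) := by
          rw [mul_div_assoc]
          linarith [hkey]
        calc (aLim - q) * (κ2 * aLim + (1 - aLim))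
            ≤ ((1 - q) * (κ2 * aLim) / (κ2 * aLim + (1 - aLim))) * (κ2 * aLim + (1 - aLim)) :=
              mul_le_mul_of_nonneg_right h4 hdenpos.le
          _ = (1 - q) * (κ2 * aLim) := div_mul_cancel₀ _ hdenpos.ne'
      have hfin : aLim * (1 - κ2) ≤ q := by
        nlinarith [mul_pos ha0 hκ2pos, sq_nonneg aLim, sq_nonneg (aLim - 1)]
      refine le_min ha1.le ?_
      rw [le_div_iff₀ (by linarith : (0 : ℝ) < 1 - κ2)]
      linarith [hfin]
  -- Part 4: endpoints tend to q
  · have hκ : Tendsto (fun Δ : ℝ => Real.exp (-(Δ - 2 * ε))) atTop (nhds 0) := by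
      apply Real.tendsto_exp_atBot.comp
      have h : Tendsto (fun Δ : ℝ => -Δ + 2 * ε) atTop atBot :=
        tendsto_atBot_add_const_right _ _ tendsto_neg_atTop_atBot
      have hfun : (fun Δ : ℝ => -(Δ - 2 * ε)) = fun Δ : ℝ => -Δ + 2 * ε :=
        funext fun Δ => by ring
      rw [hfun]
      exact h
    have h1 : Tendsto (fun Δ : ℝ =>
        (q - Real.exp (-(Δ - 2 * ε))) / (1 - Real.exp (-(Δ - 2 * ε)))) atTop
        (nhds ((q - 0) / (1 - 0))) :=
      (tendsto_const_nhds.sub hκ).div (tendsto_const_nhds.sub hκ) (by norm_num)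
    have h2 := (tendsto_const_nhds (x := (0 : ℝ)) (f := atTop)).max h1
    have : max 0 ((q - 0) / (1 - 0)) = q := by
      rw [sub_zero, sub_zero, div_one, max_eq_right hq.1.le]
    rw [this] at h2
    exact h2
  · have hκ : Tendsto (fun Δ : ℝ => Real.exp (-(Δ - 2 * ε))) atTop (nhds 0) := by
      apply Real.tendsto_exp_atBot.comp
      have h : Tendsto (fun Δ : ℝ => -Δ + 2 * ε) atTop atBot :=
        tendsto_atBot_add_const_right _ _ tendsto_neg_atTop_atBot
      have hfun : (fun Δ : ℝ => -(Δ - 2 * ε)) = fun Δ : ℝ => -Δ + 2 * ε :=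
        funext fun Δ => by ring
      rw [hfun]
      exact h
    have h1 : Tendsto (fun Δ : ℝ => q / (1 - Real.exp (-(Δ - 2 * ε)))) atTop
        (nhds (q / (1 - 0))) :=
      tendsto_const_nhds.div (tendsto_const_nhds.sub hκ) (by norm_num)
    have h2 := (tendsto_const_nhds (x := (1 : ℝ)) (f := atTop)).min h1
    have : min 1 (q / (1 - 0)) = q := by
      rw [sub_zero, div_one, min_eq_right hq.2.le]
    rw [this] at h2
    exact h2
end

section
/- Fix ε > 0 with S_{1,ε} and S_{2,ε} disjoint, let p_{t_k} ⇒ p_∞ weakly with p_∞ = a_∞·p_{∞,1} + (1 − a_∞)·p_{∞,2}, a_∞ ∈ (0,1), where p_{∞,i} is supported on S_{i,ε}, and let r_1, r_2 be bounded and continuous. Then Var_{p_{t_k}}[r_i] → Var_{p_∞}[r_i] for i ∈ {1,2}, and Var_{p_∞}[r_i] = a_∞·Var_{p_{∞,1}}[r_i] + (1 − a_∞)·Var_{p_{∞,2}}[r_i] + a_∞(1 − a_∞)·(μ_{i,1} − μ_{i,2})², where μ_{i,j} := E_{p_{∞,j}}[r_i]. If in addition r_1 ≤ r_1^* − Δ_1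 + ε on S_{2,ε} and r_2 ≤ r_2^* − Δ_2 + ε on S_{1,ε}, then Var_{p_∞}[r_i] ≥ a_∞(1 − a_∞)·(max{Δ_i − 2ε, 0})² for i ∈ {1,2}; in particular, if Δ_1, Δ_2 > 2ε both limiting reward variances are strictly positive. -/
open MeasureTheory Filter Set

/-- Variance of a (reward) function under a probability measure:
`Var_p[f] := E_p[f²] − (E_p[f])²`. -/
noncomputable def rewardVar {X : Type*} [MeasurableSpace X] (p : Measure X)
    (f : X → ℝ) : ℝ :=
  (∫ x, (f x) ^ 2 ∂p) - (∫ x, f x ∂p) ^ 2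


section Aux
variable {X : Type*} [MeasurableSpace X] [TopologicalSpace X] [OpensMeasurableSpace X]

lemma integrable_of_bdd (p : Measure X) [IsFiniteMeasure p]
    {f : X → ℝ} (hf : Continuous f) {C : ℝ} (hb : ∀ x, |f x| ≤ C) :
    Integrable f p :=
  (integrable_const C).mono' hf.aestronglyMeasurable (ae_of_all _ fun x => by
    simpa using hb x)

lemma sq_abs_bound {f : X → ℝ} {C : ℝ} (hb : ∀ x, |f x| ≤ C) (x : X) :
    |(f x) ^ 2| ≤ C ^ 2 := by
  rw [abs_of_nonneg (sq_nonneg _), ← sq_abs]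
  exact pow_le_pow_left₀ (abs_nonneg _) (hb x) 2

lemma rewardVar_eq (p : Measure X) [IsProbabilityMeasure p]
    {f : X → ℝ} (hf : Continuous f) {C : ℝ} (hb : ∀ x, |f x| ≤ C) :
    rewardVar p f = ∫ x, (f x - ∫ y, f y ∂p) ^ 2 ∂p := by
  have h1 : Integrable f p := integrable_of_bdd p hf hb
  have h2 : Integrable (fun x => (f x) ^ 2) p :=
    integrable_of_bdd p (hf.pow 2) (sq_abs_bound hb)
  set m := ∫ y, f y ∂p with hm
  have hfun : (fun x => (f x - m) ^ 2)
      = fun x => ((f x) ^ 2 - (2 * m) * f x) + m ^ 2 := by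
    funext x; ring
  have hInt : Integrable (fun x => f x ^ 2 - 2 * m * f x) p := h2.sub (h1.const_mul _)
  rw [rewardVar, hfun, integral_add hInt (integrable_const _),
    integral_sub h2 (h1.const_mul _), integral_const_mul, integral_const]
  simp only [measure_univ, probReal_univ, ENNReal.toReal_one, one_smul, ← hm]
  ring

lemma rewardVar_nonneg (p : Measure X) [IsProbabilityMeasure p]
    {f : X → ℝ} (hf : Continuous f) {C : ℝ} (hb : ∀ x, |f x| ≤ C) :
    0 ≤ rewardVar p f := by
  rw [rewardVar_eq p hf hb]
  exact integral_nonneg fun x => sq_nonneg _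

lemma integral_le_of_ae (p : Measure X) [IsProbabilityMeasure p]
    {f : X → ℝ} (hf : Integrable f p) {m : ℝ} (h : ∀ᵐ x ∂p, f x ≤ m) :
    ∫ x, f x ∂p ≤ m := by
  have := integral_mono_ae hf (integrable_const m) h
  simpa [measure_univ] using this

lemma le_integral_of_ae (p : Measure X) [IsProbabilityMeasure p]
    {f : X → ℝ} (hf : Integrable f p) {m : ℝ} (h : ∀ᵐ x ∂p, m ≤ f x) :
    m ≤ ∫ x, f x ∂p := by
  have := integral_mono_ae (integrable_const m) hf h
  simpa [measure_univ] using this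

end Aux

/-- **variance preservation under two-basin limits.**  Fix `ε > 0`
with `S_{1,ε}, S_{2,ε}` disjoint, let `p_{t_k} ⇒ p_∞` weakly with
`p_∞ = a_∞ p_{∞,1} + (1 − a_∞) p_{∞,2}`, `a_∞ ∈ (0,1)`, `p_{∞,i}` supported on
`S_{i,ε}`, and `r₁, r₂` bounded continuous.  Then `Var_{p_{t_k}}[r_i] → Var_{p_∞}[r_i]`
and `Var_{p_∞}[r_i] = a_∞ Var_{p_{∞,1}}[r_i] + (1−a_∞) Var_{p_{∞,2}}[r_i]
+ a_∞(1−a_∞)(μ_{i,1} − μ_{i,2})²` where `μ_{i,j} := E_{p_{∞,j}}[r_i]`.  If moreover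
`r₁ ≤ r₁^* − Δ₁ + ε` on `S_{2,ε}` and `r₂ ≤ r₂^* − Δ₂ + ε` on `S_{1,ε}`, then
`Var_{p_∞}[r_i] ≥ a_∞(1−a_∞) max{Δ_i − 2ε, 0}²`; in particular both limiting reward
variances are strictly positive when `Δ₁, Δ₂ > 2ε`. -/
theorem variance_preservation {d : ℕ}
    (r1 r2 : EuclideanSpace ℝ (Fin d) → ℝ)
    (hc1 : Continuous r1) (hc2 : Continuous r2)
    (C : ℝ) (hb1 : ∀ x, |r1 x| ≤ C) (hb2 : ∀ x, |r2 x| ≤ C)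
    (ε : ℝ) (hε : 0 < ε)
    (r1star r2star : ℝ)
    (hr1star : r1star = sSup (Set.range r1)) (hr2star : r2star = sSup (Set.range r2))
    (S1 S2 : Set (EuclideanSpace ℝ (Fin d)))
    (hS1 : S1 = {x | r1star - ε ≤ r1 x}) (hS2 : S2 = {x | r2star - ε ≤ r2 x})
    (hdisj : Disjoint S1 S2)
    (p : ℕ → Measure (EuclideanSpace ℝ (Fin d)))
    (hprob : ∀ t, IsProbabilityMeasure (p t))
    (φ : ℕ → ℕ) (hφ : StrictMono φ)
    (pLim pLim1 pLim2 : Measure (EuclideanSpace ℝ (Fin d)))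
    (hpLim : IsProbabilityMeasure pLim)
    (hpLim1 : IsProbabilityMeasure pLim1) (hpLim2 : IsProbabilityMeasure pLim2)
    (hsupp1 : pLim1 S1ᶜ = 0) (hsupp2 : pLim2 S2ᶜ = 0)
    (aLim : ℝ) (haLim : aLim ∈ Set.Ioo (0 : ℝ) 1)
    (hmix : pLim = ENNReal.ofReal aLim • pLim1 + ENNReal.ofReal (1 - aLim) • pLim2)
    (hconv : ∀ f : BoundedContinuousFunction (EuclideanSpace ℝ (Fin d)) ℝ,
      Tendsto (fun k => ∫ x, f x ∂(p (φ k))) atTop (nhds (∫ x, f x ∂pLim))) :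
    -- convergence of variances along the subsequence
    Tendsto (fun k => rewardVar (p (φ k)) r1) atTop (nhds (rewardVar pLim r1)) ∧
    Tendsto (fun k => rewardVar (p (φ k)) r2) atTop (nhds (rewardVar pLim r2)) ∧
    -- explicit mixture decomposition of the limiting variance
    (rewardVar pLim r1 =
      aLim * rewardVar pLim1 r1 + (1 - aLim) * rewardVar pLim2 r1 +
        aLim * (1 - aLim) * ((∫ x, r1 x ∂pLim1) - (∫ x, r1 x ∂pLim2)) ^ 2) ∧
    (rewardVar pLim r2 =
      aLim * rewardVar pLim1 r2 + (1 - aLim) * rewardVar pLim2 r2 +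
        aLim * (1 - aLim) * ((∫ x, r2 x ∂pLim1) - (∫ x, r2 x ∂pLim2)) ^ 2) ∧
    -- under basin separation: quantitative lower bound, hence strict positivity
    (∀ Δ1 Δ2 : ℝ,
      (∀ x ∈ S2, r1 x ≤ r1star - Δ1 + ε) →
      (∀ x ∈ S1, r2 x ≤ r2star - Δ2 + ε) →
      (aLim * (1 - aLim) * (max (Δ1 - 2 * ε) 0) ^ 2 ≤ rewardVar pLim r1 ∧
       aLim * (1 - aLim) * (max (Δ2 - 2 * ε) 0) ^ 2 ≤ rewardVar pLim r2) ∧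
      (2 * ε < Δ1 → 2 * ε < Δ2 →
        0 < rewardVar pLim r1 ∧ 0 < rewardVar pLim r2)) := by

  classical
  haveI := hpLim; haveI := hpLim1; haveI := hpLim2
  obtain ⟨ha0, ha1⟩ := haLim
  have ha1' : (0:ℝ) ≤ 1 - aLim := by linarith
  -- mixture integrals
  have hmixInt : ∀ (f : EuclideanSpace ℝ (Fin d) → ℝ),
      Integrable f pLim1 → Integrable f pLim2 →
      ∫ x, f x ∂pLim = aLim * ∫ x, f x ∂pLim1 + (1 - aLim) * ∫ x, f x ∂pLim2 := by
    intro f h1 h2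
    rw [hmix, integral_add_measure (h1.smul_measure ENNReal.ofReal_ne_top)
        (h2.smul_measure ENNReal.ofReal_ne_top),
      integral_smul_measure, integral_smul_measure,
      ENNReal.toReal_ofReal ha0.le, ENNReal.toReal_ofReal ha1']
    simp [smul_eq_mul]
  -- decomposition
  have hdec : ∀ (r : EuclideanSpace ℝ (Fin d) → ℝ), Continuous r → (∀ x, |r x| ≤ C) →
      rewardVar pLim r = aLim * rewardVar pLim1 r + (1 - aLim) * rewardVar pLim2 r +
        aLim * (1 - aLim) * ((∫ x, r x ∂pLim1) - (∫ x, r x ∂pLim2)) ^ 2 := by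
    intro r hc hb
    have e1 := hmixInt r (integrable_of_bdd _ hc hb) (integrable_of_bdd _ hc hb)
    have e2 := hmixInt (fun x => (r x) ^ 2)
      (integrable_of_bdd _ (hc.pow 2) (sq_abs_bound hb))
      (integrable_of_bdd _ (hc.pow 2) (sq_abs_bound hb))
    simp only [rewardVar, e1, e2]
    ring
  -- convergence
  have htend : ∀ (r : EuclideanSpace ℝ (Fin d) → ℝ)
      (hc : Continuous r) (hb : ∀ x, |r x| ≤ C),
      Tendsto (fun k => rewardVar (p (φ k)) r) atTop (nhds (rewardVar pLim r)) := by
    intro r hc hb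
    have t1 := hconv (BoundedContinuousFunction.ofNormedAddCommGroup r hc C
      (fun x => by simpa using hb x))
    have t2 := hconv (BoundedContinuousFunction.ofNormedAddCommGroup (fun x => (r x) ^ 2)
      (hc.pow 2) (C ^ 2) (fun x => by simpa using sq_abs_bound hb x))
    simp only [BoundedContinuousFunction.coe_ofNormedAddCommGroup] at t1 t2
    exact t2.sub (t1.pow 2)
  -- general lower bound
  have hlow : ∀ (r : EuclideanSpace ℝ (Fin d) → ℝ)
      (hc : Continuous r) (hb : ∀ x, |r x| ≤ C) (D : ℝ),
      0 ≤ D → D ≤ |(∫ x, r x ∂pLim1) - (∫ x, r x ∂pLim2)| →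
      aLim * (1 - aLim) * D ^ 2 ≤ rewardVar pLim r := by
    intro r hc hb D hD0 hD
    have h1 := rewardVar_nonneg pLim1 hc hb
    have h2 := rewardVar_nonneg pLim2 hc hb
    have hsq : D ^ 2 ≤ ((∫ x, r x ∂pLim1) - (∫ x, r x ∂pLim2)) ^ 2 := by
      rw [← sq_abs ((∫ x, r x ∂pLim1) - (∫ x, r x ∂pLim2))]
      exact pow_le_pow_left₀ hD0 hD 2
    rw [hdec r hc hb]
    nlinarith [mul_nonneg ha0.le h1, mul_nonneg ha1' h2,
      mul_le_mul_of_nonneg_left hsq (mul_nonneg ha0.le ha1')]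
  have hae1 : ∀ᵐ x ∂pLim1, x ∈ S1 := by
    rw [ae_iff]
    exact hsupp1
  have hae2 : ∀ᵐ x ∂pLim2, x ∈ S2 := by
    rw [ae_iff]
    exact hsupp2
  refine ⟨htend r1 hc1 hb1, htend r2 hc2 hb2, hdec r1 hc1 hb1, hdec r2 hc2 hb2, ?_⟩
  intro Δ1 Δ2 h12 h21
  -- mean bounds
  have hμ11 : r1star - ε ≤ ∫ x, r1 x ∂pLim1 := by
    apply le_integral_of_ae pLim1 (integrable_of_bdd _ hc1 hb1)
    filter_upwards [hae1] with x hx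
    rw [hS1] at hx; exact hx
  have hμ12 : ∫ x, r1 x ∂pLim2 ≤ r1star - Δ1 + ε := by
    apply integral_le_of_ae pLim2 (integrable_of_bdd _ hc1 hb1)
    filter_upwards [hae2] with x hx
    exact h12 x hx
  have hμ22 : r2star - ε ≤ ∫ x, r2 x ∂pLim2 := by
    apply le_integral_of_ae pLim2 (integrable_of_bdd _ hc2 hb2)
    filter_upwards [hae2] with x hx
    rw [hS2] at hx; exact hx
  have hμ21 : ∫ x, r2 x ∂pLim1 ≤ r2star - Δ2 + ε := by
    apply integral_le_of_ae pLim1 (integrable_of_bdd _ hc2 hb2)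
    filter_upwards [hae1] with x hx
    exact h21 x hx
  have hD1 : max (Δ1 - 2 * ε) 0 ≤ |(∫ x, r1 x ∂pLim1) - (∫ x, r1 x ∂pLim2)| := by
    rcases le_or_gt (Δ1 - 2 * ε) 0 with h | h
    · rw [max_eq_right h]; exact abs_nonneg _
    · rw [max_eq_left h.le]
      refine le_trans ?_ (le_abs_self _)
      linarith
  have hD2 : max (Δ2 - 2 * ε) 0 ≤ |(∫ x, r2 x ∂pLim1) - (∫ x, r2 x ∂pLim2)| := by
    rcases le_or_gt (Δ2 - 2 * ε) 0 with h | h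
    · rw [max_eq_right h]; exact abs_nonneg _
    · rw [max_eq_left h.le]
      rw [abs_sub_comm]
      refine le_trans ?_ (le_abs_self _)
      linarith
  have hb1' := hlow r1 hc1 hb1 _ (le_max_right _ _) hD1
  have hb2' := hlow r2 hc2 hb2 _ (le_max_right _ _) hD2
  refine ⟨⟨hb1', hb2'⟩, fun hΔ1 hΔ2 => ⟨?_, ?_⟩⟩
  · refine lt_of_lt_of_le ?_ hb1'
    have : (0:ℝ) < max (Δ1 - 2 * ε) 0 := lt_max_of_lt_left (by linarith)
    exact mul_pos (mul_pos ha0 (by linarith)) (pow_pos this 2)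
  · refine lt_of_lt_of_le ?_ hb2'
    have : (0:ℝ) < max (Δ2 - 2 * ε) 0 := lt_max_of_lt_left (by linarith)
    exact mul_pos (mul_pos ha0 (by linarith)) (pow_pos this 2)
end
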